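/- arXiv:2109.09642 — 5 statements merged into one kernel-verified Lean document; each statement's English description precedes it below -/
import Mathlib

section
/- Let $k,t$ be positive integers and $0<\varepsilon,\delta,\gamma<1$ with $\delta\varepsilon^{kt}\geq 2\gamma^t$. Let $G$ be a bipartite graph with parts $A$ and $B$ and at least $\varepsilon|A||B|$ edges. Then there exists a set $S\subseteq A$ with $|S|\geq \tfrac{1}{2}\varepsilon^t|A|$ such that the number of $k$-element subsets of $S$ having fewer than $\gamma|B|$ common neighbours in $B$ is at most $\delta|S|^k$. -/
open scoped Classical

open Finset

section Aux

variable {A B : Type*} [Fintype A] [Fintype B] [DecidableEq A] [DecidableEq B]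

/-- number of functions `Fin t → B` landing in `s` -/
lemma drc_pi_filter_card (t : ℕ) (s : Finset B) :
    ((Finset.univ : Finset (Fin t → B)).filter (fun f => ∀ i, f i ∈ s)).card
      = s.card ^ t := by
  have h : ((Finset.univ : Finset (Fin t → B)).filter (fun f => ∀ i, f i ∈ s))
      = Fintype.piFinset (fun _ : Fin t => s) := by
    ext f
    simp [Fintype.mem_piFinset]
  rw [h, Fintype.card_piFinset]
  simp

/-- Jensen for powers. -/
lemma drc_jensen {ι : Type*} (s : Finset ι) (f : ι → ℝ) (hf : ∀ i ∈ s, 0 ≤ f i)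
    {m : ℕ} (hm : m ≠ 0) :
    (∑ i ∈ s, f i) ^ m ≤ (s.card : ℝ) ^ (m - 1) * ∑ i ∈ s, f i ^ m := by
  obtain ⟨n, rfl⟩ := Nat.exists_eq_succ_of_ne_zero hm
  rcases s.eq_empty_or_nonempty with rfl | hs
  · simp
  · have hc : (0 : ℝ) < (s.card : ℝ) ^ n := by
      have : 0 < s.card := hs.card_pos
      positivity
    have h := pow_sum_div_card_le_sum_pow hf n
    rw [div_le_iff₀ hc] at h
    calc (∑ i ∈ s, f i) ^ (n + 1) ≤ (∑ i ∈ s, f i ^ (n + 1)) * (s.card : ℝ) ^ n := h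
      _ = (s.card : ℝ) ^ (n + 1 - 1) * ∑ i ∈ s, f i ^ (n + 1) := by
          rw [Nat.add_sub_cancel]; ring

lemma drc_deg_sum (E : Finset (A × B)) :
    ∑ a : A, ((Finset.univ.filter (fun b : B => (a, b) ∈ E)).card) = E.card := by
  rw [Finset.card_eq_sum_card_fiberwise (f := Prod.fst) (t := Finset.univ)
    (fun x _ => Finset.mem_univ _)]
  refine Finset.sum_congr rfl fun a _ => ?_
  refine Finset.card_bij' (fun b _ => (a, b)) (fun x _ => x.2) ?_ ?_ ?_ ?_
  · intro b hb
    simp only [Finset.mem_filter, Finset.mem_univ, true_and] at hb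
    simp [hb]
  · intro x hx
    simp only [Finset.mem_filter] at hx
    simp only [Finset.mem_filter, Finset.mem_univ, true_and]
    rcases x with ⟨x1, x2⟩
    obtain ⟨h1, rfl⟩ := hx
    exact h1
  · intro b hb; rfl
  · intro x hx
    simp only [Finset.mem_filter] at hx
    obtain ⟨-, h⟩ := hx
    exact Prod.ext h.symm rfl

end Aux

/-- Dependent random choice (Lemma 4 of the paper). -/
theorem stmt_0 {A B : Type*} [Fintype A] [Fintype B] [DecidableEq A] [DecidableEq B]
    (E : Finset (A × B)) (k t : ℕ) (hk : 0 < k) (ht : 0 < t)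
    (ε δ γ : ℝ) (hε : 0 < ε) (hε1 : ε < 1) (hδ : 0 < δ) (hδ1 : δ < 1)
    (hγ : 0 < γ) (hγ1 : γ < 1)
    (hcond : 2 * γ ^ t ≤ δ * ε ^ (k * t))
    (hE : ε * (Fintype.card A : ℝ) * (Fintype.card B : ℝ) ≤ (E.card : ℝ)) :
    ∃ S : Finset A, (1 / 2 : ℝ) * ε ^ t * (Fintype.card A : ℝ) ≤ (S.card : ℝ) ∧
      (((S.powersetCard k).filter (fun T =>
          ((Finset.univ.filter (fun b : B => ∀ a ∈ T, (a, b) ∈ E)).card : ℝ)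
            < γ * (Fintype.card B : ℝ))).card : ℝ) ≤ δ * (S.card : ℝ) ^ k := by
  classical
  -- trivial case : B empty
  by_cases hBcard : Fintype.card B = 0
  · refine ⟨Finset.univ, ?_, ?_⟩
    · rw [Finset.card_univ]
      have h1 : ε ^ t ≤ 1 := pow_le_one₀ hε.le hε1.le
      have h2 : (0:ℝ) ≤ (Fintype.card A : ℝ) := Nat.cast_nonneg _
      nlinarith
    · have hempty : (((Finset.univ : Finset A).powersetCard k).filter (fun T =>
          ((Finset.univ.filter (fun b : B => ∀ a ∈ T, (a, b) ∈ E)).card : ℝ)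
            < γ * (Fintype.card B : ℝ))) = ∅ := by
        refine Finset.filter_eq_empty_iff.2 fun T _ => ?_
        rw [hBcard]
        push_cast
        simp only [mul_zero, not_lt]
        exact Nat.cast_nonneg _
      rw [hempty]
      simp only [Finset.card_empty, Nat.cast_zero]
      positivity
  by_cases hAcard : Fintype.card A = 0
  · refine ⟨∅, ?_, ?_⟩
    · rw [hAcard]; simp
    · have hempty : ((∅ : Finset A).powersetCard k) = ∅ := by
        ext T
        simp only [Finset.mem_powersetCard, Finset.notMem_empty, iff_false, not_and]
        intro hT h
        have h0 := Finset.subset_empty.1 hT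
        subst h0
        simp at h
        omega
      rw [hempty]
      simp only [Finset.filter_empty, Finset.card_empty, Nat.cast_zero]
      rw [zero_pow hk.ne']
      simp
  -- main case
  have hA0 : 0 < Fintype.card A := Nat.pos_of_ne_zero hAcard
  have hB0 : 0 < Fintype.card B := Nat.pos_of_ne_zero hBcard
  have hcA : (0:ℝ) < (Fintype.card A : ℝ) := by exact_mod_cast hA0
  have hcB : (0:ℝ) < (Fintype.card B : ℝ) := by exact_mod_cast hB0
  set cA : ℝ := (Fintype.card A : ℝ) with hcA_def
  set cB : ℝ := (Fintype.card B : ℝ) with hcB_def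
  -- common-neighbourhood map and related sets
  set N : Finset A → Finset B := fun T =>
    Finset.univ.filter (fun b : B => ∀ a ∈ T, (a, b) ∈ E) with hN_def
  set S : (Fin t → B) → Finset A := fun f =>
    Finset.univ.filter (fun a : A => ∀ i, (a, f i) ∈ E) with hS_def
  set deg : A → Finset B := fun a => Finset.univ.filter (fun b : B => (a, b) ∈ E) with hdeg_def
  set bT : Finset (Finset A) := ((Finset.univ : Finset A).powersetCard k).filter
    (fun T => ((N T).card : ℝ) < γ * cB) with hbT_def
  -- step 1 : ∑_f |S f| = ∑_a deg(a)^t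
  have step1 : ∑ f : Fin t → B, (S f).card = ∑ a : A, (deg a).card ^ t := by
    calc ∑ f : Fin t → B, (S f).card
        = ∑ f : Fin t → B, ∑ a : A, (if ∀ i, (a, f i) ∈ E then 1 else 0) := by
          refine Finset.sum_congr rfl fun f _ => ?_
          rw [hS_def]
          exact Finset.card_filter _ _
      _ = ∑ a : A, ∑ f : Fin t → B, (if ∀ i, (a, f i) ∈ E then 1 else 0) := Finset.sum_comm
      _ = ∑ a : A, ((Finset.univ : Finset (Fin t → B)).filter (fun f => ∀ i, f i ∈ deg a)).card := by
          refine Finset.sum_congr rfl fun a _ => ?_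
          rw [Finset.card_filter]
          refine Finset.sum_congr rfl fun f _ => ?_
          congr 1
          rw [hdeg_def]
          simp
      _ = ∑ a : A, (deg a).card ^ t := by
          refine Finset.sum_congr rfl fun a _ => ?_
          rw [drc_pi_filter_card]
  -- step 2 : ∑_f bad f = ∑_{T bad} |N T|^t
  have hTS : ∀ (T : Finset A) (f : Fin t → B), T ⊆ S f ↔ ∀ i, f i ∈ N T := by
    intro T f
    constructor
    · intro h i
      rw [hN_def]
      simp only [Finset.mem_filter, Finset.mem_univ, true_and]
      intro a ha
      have h2 := h ha
      rw [hS_def] at h2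
      simp only [Finset.mem_filter, Finset.mem_univ, true_and] at h2
      exact h2 i
    · intro h a ha
      rw [hS_def]
      simp only [Finset.mem_filter, Finset.mem_univ, true_and]
      intro i
      have h2 := h i
      rw [hN_def] at h2
      simp only [Finset.mem_filter, Finset.mem_univ, true_and] at h2
      exact h2 a ha
  have step2 : ∑ f : Fin t → B, (bT.filter (fun T => T ⊆ S f)).card
      = ∑ T ∈ bT, (N T).card ^ t := by
    calc ∑ f : Fin t → B, (bT.filter (fun T => T ⊆ S f)).card
        = ∑ f : Fin t → B, ∑ T ∈ bT, (if T ⊆ S f then 1 else 0) := by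
          refine Finset.sum_congr rfl fun f _ => ?_
          exact Finset.card_filter _ _
      _ = ∑ T ∈ bT, ∑ f : Fin t → B, (if T ⊆ S f then 1 else 0) := Finset.sum_comm
      _ = ∑ T ∈ bT, ((Finset.univ : Finset (Fin t → B)).filter (fun f => ∀ i, f i ∈ N T)).card := by
          refine Finset.sum_congr rfl fun T _ => ?_
          rw [Finset.card_filter]
          refine Finset.sum_congr rfl fun f _ => ?_
          congr 1
          exact propext (hTS T f)
      _ = ∑ T ∈ bT, (N T).card ^ t := by
          refine Finset.sum_congr rfl fun T _ => ?_
          rw [drc_pi_filter_card]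
  -- identification of the bad sets of a given S
  have hfilter : ∀ f : Fin t → B,
      ((S f).powersetCard k).filter (fun T =>
          ((Finset.univ.filter (fun b : B => ∀ a ∈ T, (a, b) ∈ E)).card : ℝ)
            < γ * (Fintype.card B : ℝ))
        = bT.filter (fun T => T ⊆ S f) := by
    intro f
    ext T
    simp only [Finset.mem_filter, Finset.mem_powersetCard, hbT_def, hN_def, hcB_def]
    exact ⟨fun ⟨⟨h1, h2⟩, h3⟩ => ⟨⟨⟨Finset.subset_univ T, h2⟩, h3⟩, h1⟩,
      fun ⟨⟨⟨_, h2⟩, h3⟩, h1⟩ => ⟨⟨h1, h2⟩, h3⟩⟩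
  -- real estimate : ∑_a deg(a) ≥ ε cA cB
  have hdeg_sum : (ε * cA * cB) ≤ ∑ a : A, ((deg a).card : ℝ) := by
    have h := drc_deg_sum E
    have h2 : ∑ a : A, ((deg a).card : ℝ) = ((E.card : ℕ) : ℝ) := by
      rw [← h, hdeg_def]
      push_cast
      rfl
    rw [h2]
    exact hE
  -- real estimate : ∑_f |S f| ≥ ε^t cA cB^t
  have hS1 : ε ^ t * cA * cB ^ t ≤ ∑ f : Fin t → B, ((S f).card : ℝ) := by
    have hj := drc_jensen (Finset.univ : Finset A) (fun a => ((deg a).card : ℝ))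
      (fun a _ => Nat.cast_nonneg _) ht.ne'
    rw [Finset.card_univ] at hj
    have h1 : (ε * cA * cB) ^ t ≤ (∑ a : A, ((deg a).card : ℝ)) ^ t :=
      pow_le_pow_left₀ (by positivity) hdeg_sum t
    have h2 : cA ^ (t - 1) * (ε ^ t * cA * cB ^ t) = (ε * cA * cB) ^ t := by
      rw [mul_pow, mul_pow]
      rw [← pow_sub_one_mul ht.ne' cA]
      ring
    have h3 : cA ^ (t-1) * (ε ^ t * cA * cB ^ t) ≤ cA ^ (t-1) * ∑ a : A, ((deg a).card : ℝ) ^ t := by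
      rw [h2]
      exact h1.trans hj
    have h4 := le_of_mul_le_mul_left h3 (by positivity : (0:ℝ) < cA ^ (t-1))
    have h5 : ∑ f : Fin t → B, ((S f).card : ℝ) = ∑ a : A, ((deg a).card : ℝ) ^ t := by
      calc ∑ f : Fin t → B, ((S f).card : ℝ)
          = ((∑ f : Fin t → B, (S f).card : ℕ) : ℝ) := by push_cast; rfl
        _ = ((∑ a : A, (deg a).card ^ t : ℕ) : ℝ) := by rw [step1]
        _ = ∑ a : A, ((deg a).card : ℝ) ^ t := by push_cast; rfl
    rw [h5]
    exact h4
  -- real estimate : ∑_f |S f|^k ≥ ε^(kt) cA^k cB^t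
  have hcardfun : ((Fintype.card (Fin t → B) : ℕ) : ℝ) = cB ^ t := by
    rw [Fintype.card_fun, Fintype.card_fin]
    push_cast
    rfl
  have hS2 : ε ^ (k * t) * cA ^ k * cB ^ t ≤ ∑ f : Fin t → B, ((S f).card : ℝ) ^ k := by
    have hj := drc_jensen (Finset.univ : Finset (Fin t → B)) (fun f => ((S f).card : ℝ))
      (fun f _ => Nat.cast_nonneg _) hk.ne'
    rw [Finset.card_univ, hcardfun] at hj
    have h1 : (ε ^ t * cA * cB ^ t) ^ k ≤ (∑ f : Fin t → B, ((S f).card : ℝ)) ^ k :=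
      pow_le_pow_left₀ (by positivity) hS1 k
    have h2 : (cB ^ t) ^ (k - 1) * (ε ^ (k * t) * cA ^ k * cB ^ t) = (ε ^ t * cA * cB ^ t) ^ k := by
      rw [mul_pow, mul_pow, ← pow_mul, ← pow_mul, ← pow_sub_one_mul hk.ne' (cB ^ t), ← pow_mul]
      ring_nf
    have h3 : (cB ^ t) ^ (k-1) * (ε ^ (k * t) * cA ^ k * cB ^ t)
        ≤ (cB ^ t) ^ (k-1) * ∑ f : Fin t → B, ((S f).card : ℝ) ^ k := by
      rw [h2]
      exact h1.trans hj
    exact le_of_mul_le_mul_left h3 (by positivity : (0:ℝ) < (cB ^ t) ^ (k-1))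
  -- bad-set estimate
  have hbad : ∑ f : Fin t → B, ((bT.filter (fun T => T ⊆ S f)).card : ℝ)
      ≤ γ ^ t * cB ^ t * cA ^ k := by
    have h0 : ∑ f : Fin t → B, ((bT.filter (fun T => T ⊆ S f)).card : ℝ)
        = ∑ T ∈ bT, ((N T).card : ℝ) ^ t := by
      calc ∑ f : Fin t → B, ((bT.filter (fun T => T ⊆ S f)).card : ℝ)
          = ((∑ f : Fin t → B, (bT.filter (fun T => T ⊆ S f)).card : ℕ) : ℝ) := by push_cast; rfl
        _ = ((∑ T ∈ bT, (N T).card ^ t : ℕ) : ℝ) := by rw [step2]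
        _ = ∑ T ∈ bT, ((N T).card : ℝ) ^ t := by push_cast; rfl
    rw [h0]
    have h1 : ∀ T ∈ bT, ((N T).card : ℝ) ^ t ≤ (γ * cB) ^ t := by
      intro T hT
      rw [hbT_def] at hT
      simp only [Finset.mem_filter] at hT
      exact pow_le_pow_left₀ (Nat.cast_nonneg _) hT.2.le t
    calc ∑ T ∈ bT, ((N T).card : ℝ) ^ t ≤ ∑ _T ∈ bT, (γ * cB) ^ t := Finset.sum_le_sum h1
      _ = (bT.card : ℝ) * (γ * cB) ^ t := by rw [Finset.sum_const, nsmul_eq_mul]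
      _ ≤ cA ^ k * (γ * cB) ^ t := by
          refine mul_le_mul_of_nonneg_right ?_ (by positivity)
          have hb1 : bT.card ≤ ((Finset.univ : Finset A).powersetCard k).card :=
            Finset.card_le_card (Finset.filter_subset _ _)
          have hb2 : ((Finset.univ : Finset A).powersetCard k).card = (Fintype.card A).choose k := by
            rw [Finset.card_powersetCard, Finset.card_univ]
          have hb3 : (Fintype.card A).choose k ≤ (Fintype.card A) ^ k := Nat.choose_le_pow _ _
          have : bT.card ≤ (Fintype.card A) ^ k := hb1.trans (hb2 ▸ hb3)
          calc (bT.card : ℝ) ≤ (((Fintype.card A) ^ k : ℕ) : ℝ) := by exact_mod_cast this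
            _ = cA ^ k := by push_cast; rfl
      _ = γ ^ t * cB ^ t * cA ^ k := by ring
  -- combine: average argument
  have hNB : Nonempty B := Fintype.card_pos_iff.mp hB0
  have hNf : Nonempty (Fin t → B) := ⟨fun _ => Classical.choice hNB⟩
  have hkey : γ ^ t + δ * (1/2 : ℝ) ^ k * ε ^ (k * t) ≤ δ * ε ^ (k * t) := by
    have hhalf : ((1:ℝ)/2) ^ k ≤ (1/2 : ℝ) := by
      calc ((1:ℝ)/2) ^ k ≤ ((1:ℝ)/2) ^ 1 := by
            apply pow_le_pow_of_le_one (by norm_num) (by norm_num) hk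
        _ = (1/2 : ℝ) := pow_one _
    have h2 : δ * (1/2:ℝ) ^ k * ε ^ (k*t) ≤ δ * (1/2:ℝ) * ε ^ (k*t) := by
      have := mul_le_mul_of_nonneg_left hhalf hδ.le
      exact mul_le_mul_of_nonneg_right this (by positivity)
    nlinarith
  have hmain : ∑ _f : Fin t → B, (δ * ((1/2:ℝ) * ε ^ t * cA) ^ k)
      ≤ ∑ f : Fin t → B, (δ * ((S f).card : ℝ) ^ k - ((bT.filter (fun T => T ⊆ S f)).card : ℝ)) := by
    rw [Finset.sum_const, Finset.card_univ, nsmul_eq_mul, hcardfun]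
    rw [Finset.sum_sub_distrib, ← Finset.mul_sum]
    have hmul := mul_le_mul_of_nonneg_right hkey (by positivity : (0:ℝ) ≤ cA ^ k * cB ^ t)
    have hS2' : δ * (ε ^ (k * t) * cA ^ k * cB ^ t) ≤ δ * ∑ f : Fin t → B, ((S f).card : ℝ) ^ k :=
      mul_le_mul_of_nonneg_left hS2 hδ.le
    have hexp : ((1/2:ℝ) * ε ^ t * cA) ^ k = (1/2:ℝ) ^ k * ε ^ (k * t) * cA ^ k := by
      rw [mul_pow, mul_pow, ← pow_mul, mul_comm t k]
    rw [hexp]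
    nlinarith [hbad]
  obtain ⟨f₀, -, hf₀⟩ := Finset.exists_le_of_sum_le Finset.univ_nonempty hmain
  have hb0 : (0:ℝ) ≤ ((bT.filter (fun T => T ⊆ S f₀)).card : ℝ) := Nat.cast_nonneg _
  have h1 : ((1/2:ℝ) * ε ^ t * cA) ^ k ≤ ((S f₀).card : ℝ) ^ k := by
    have : δ * ((1/2:ℝ) * ε ^ t * cA) ^ k ≤ δ * ((S f₀).card : ℝ) ^ k := by linarith
    exact le_of_mul_le_mul_left this hδ
  have h2 : (1/2:ℝ) * ε ^ t * cA ≤ ((S f₀).card : ℝ) :=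
    (pow_le_pow_iff_left₀ (by positivity) (Nat.cast_nonneg _) hk.ne').mp h1
  refine ⟨S f₀, h2, ?_⟩
  rw [hfilter f₀]
  have h3 : (0:ℝ) ≤ δ * ((1/2:ℝ) * ε ^ t * cA) ^ k := by positivity
  linarith
end

section
/- Let $0<\varepsilon,\delta<1$ with $\delta\geq 2\varepsilon^4$. Let $G$ be a bipartite graph with parts $A$ and $B$ and at least $\varepsilon|A||B|$ edges. Then there exists a set $S\subseteq A$ with $|S|\geq \tfrac{1}{2}\varepsilon^4|A|$ such that all but at most $\delta|S|^2$ ordered pairs of vertices in $S$ have at least $\varepsilon^3|B|$ common neighbours. -/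
open scoped Classical

private lemma drc_ite2 (c1 c2 : Prop) [Decidable c1] [Decidable c2] :
    (if c1 ∧ c2 then (1:ℝ) else 0) = (if c1 then (1:ℝ) else 0) * (if c2 then (1:ℝ) else 0) := by
  split_ifs <;> simp_all

private lemma drc_ite3 (c1 c2 c3 : Prop) [Decidable c1] [Decidable c2] [Decidable c3] :
    (if c1 ∧ c2 ∧ c3 then (1:ℝ) else 0)
      = (if c1 then (1:ℝ) else 0) * ((if c2 then (1:ℝ) else 0) * (if c3 then (1:ℝ) else 0)) := by
  split_ifs <;> simp_all

private lemma drc_ite4 (c1 c2 c3 c4 : Prop) [Decidable c1] [Decidable c2] [Decidable c3]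
    [Decidable c4] :
    (if c1 ∧ c2 ∧ c3 ∧ c4 then (1:ℝ) else 0)
      = (if c1 then (1:ℝ) else 0) * (if c2 then (1:ℝ) else 0) * (if c3 then (1:ℝ) else 0)
        * (if c4 then (1:ℝ) else 0) := by
  split_ifs <;> simp_all

private lemma drc_sum4 {B : Type*} [Fintype B] (f : B → ℝ) :
    ∑ t : B × B × B × B, f t.1 * f t.2.1 * f t.2.2.1 * f t.2.2.2 = (∑ x : B, f x) ^ 4 := by
  simp only [Fintype.sum_prod_type, mul_assoc, ← Finset.mul_sum, ← Finset.sum_mul]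
  ring

set_option maxHeartbeats 1000000 in
/-- Dependent random choice for pairs (k = 2, t = 4). -/
theorem stmt_1 {A B : Type*} [Fintype A] [Fintype B] [DecidableEq A] [DecidableEq B]
    (E : Finset (A × B))
    (ε δ : ℝ) (hε : 0 < ε) (hε1 : ε < 1) (hδ : 0 < δ) (hδ1 : δ < 1)
    (hcond : 2 * ε ^ 4 ≤ δ)
    (hE : ε * (Fintype.card A : ℝ) * (Fintype.card B : ℝ) ≤ (E.card : ℝ)) :
    ∃ S : Finset A, (1 / 2 : ℝ) * ε ^ 4 * (Fintype.card A : ℝ) ≤ (S.card : ℝ) ∧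
      (((S ×ˢ S).filter (fun p : A × A =>
          ((Finset.univ.filter (fun b : B => (p.1, b) ∈ E ∧ (p.2, b) ∈ E)).card : ℝ)
            < ε ^ 3 * (Fintype.card B : ℝ))).card : ℝ) ≤ δ * (S.card : ℝ) ^ 2 := by
  by_cases hB0 : Fintype.card B = 0
  · refine ⟨Finset.univ, ?_, ?_⟩
    · have h1 : ε ^ 4 ≤ 1 := pow_le_one₀ hε.le hε1.le
      have h2 : (0:ℝ) ≤ (Fintype.card A : ℝ) := Nat.cast_nonneg _
      rw [Finset.card_univ]
      nlinarith
    · have hno : ∀ p ∈ (Finset.univ ×ˢ Finset.univ : Finset (A × A)),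
          ¬ (((Finset.univ.filter (fun b : B => (p.1, b) ∈ E ∧ (p.2, b) ∈ E)).card : ℝ)
            < ε ^ 3 * (Fintype.card B : ℝ)) := by
        intro p _
        rw [hB0]
        push_cast
        rw [mul_zero]
        exact not_lt.2 (Nat.cast_nonneg _)
      rw [Finset.filter_false_of_mem hno, Finset.card_empty]
      push_cast
      positivity
  by_cases hA0 : Fintype.card A = 0
  · refine ⟨∅, ?_, ?_⟩
    · simp [hA0]
    · simp only [Finset.empty_product, Finset.filter_empty, Finset.card_empty, Nat.cast_zero]
      positivity
  -- main case
  have hApos : (0:ℝ) < (Fintype.card A : ℝ) := by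
    exact_mod_cast Nat.pos_of_ne_zero hA0
  have hBpos : (0:ℝ) < (Fintype.card B : ℝ) := by
    exact_mod_cast Nat.pos_of_ne_zero hB0
  have hBne : Nonempty B := Fintype.card_pos_iff.mp (Nat.pos_of_ne_zero hB0)
  set a : ℝ := (Fintype.card A : ℝ) with ha
  set b : ℝ := (Fintype.card B : ℝ) with hb
  set ind : A → B → ℝ := fun x y => if (x, y) ∈ E then 1 else 0 with hind
  have hind_nonneg : ∀ x y, 0 ≤ ind x y := by
    intro x y; rw [hind]; dsimp only; split_ifs <;> norm_num
  set I : A → B × B × B × B → ℝ :=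
    fun x t => ind x t.1 * ind x t.2.1 * ind x t.2.2.1 * ind x t.2.2.2 with hI
  set St : B × B × B × B → Finset A := fun t => Finset.univ.filter
    (fun x => (x, t.1) ∈ E ∧ (x, t.2.1) ∈ E ∧ (x, t.2.2.1) ∈ E ∧ (x, t.2.2.2) ∈ E) with hSt
  set cod : A × A → ℝ := fun p => ∑ y : B, ind p.1 y * ind p.2 y with hcodd
  set P : A × A → Prop := fun p =>
    ((Finset.univ.filter (fun bb : B => (p.1, bb) ∈ E ∧ (p.2, bb) ∈ E)).card : ℝ)
      < ε ^ 3 * b with hP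
  -- (1) card of St t as a sum of indicators
  have card_St : ∀ t, ((St t).card : ℝ) = ∑ x : A, I x t := by
    intro t
    rw [hSt]
    dsimp only
    rw [show ((Finset.univ.filter (fun x : A => (x, t.1) ∈ E ∧ (x, t.2.1) ∈ E ∧
        (x, t.2.2.1) ∈ E ∧ (x, t.2.2.2) ∈ E)).card : ℝ)
        = ∑ x : A, if ((x, t.1) ∈ E ∧ (x, t.2.1) ∈ E ∧ (x, t.2.2.1) ∈ E ∧ (x, t.2.2.2) ∈ E)
          then (1:ℝ) else 0 from (Finset.sum_boole _ _).symm]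
    refine Finset.sum_congr rfl fun x _ => ?_
    rw [hI, hind]
    dsimp only
    exact drc_ite4 _ _ _ _
  -- indicator of membership in St t
  have hmemSt : ∀ (x : A) t, (if x ∈ St t then (1:ℝ) else 0) = I x t := by
    intro x t
    rw [hSt, hI, hind]
    simp only [Finset.mem_filter, Finset.mem_univ, true_and]
    exact drc_ite4 _ _ _ _
  -- (2) sum of I over all tuples
  have sum_I : ∀ x : A, ∑ t : B × B × B × B, I x t = (∑ y : B, ind x y) ^ 4 := by
    intro x
    rw [hI]
    exact drc_sum4 (ind x)
  -- (3) sum of products of I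
  have sum_II : ∀ p : A × A, ∑ t : B × B × B × B, I p.1 t * I p.2 t = cod p ^ 4 := by
    intro p
    rw [hcodd]
    dsimp only
    rw [← drc_sum4 (fun y => ind p.1 y * ind p.2 y)]
    refine Finset.sum_congr rfl fun t _ => ?_
    rw [hI]
    dsimp only
    ring
  -- (4) cod equals the cast of the codegree card
  have hcod_card : ∀ p : A × A,
      ((Finset.univ.filter (fun bb : B => (p.1, bb) ∈ E ∧ (p.2, bb) ∈ E)).card : ℝ) = cod p := by
    intro p
    rw [hcodd]
    dsimp only
    rw [show ((Finset.univ.filter (fun bb : B => (p.1, bb) ∈ E ∧ (p.2, bb) ∈ E)).card : ℝ)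
        = ∑ y : B, if ((p.1, y) ∈ E ∧ (p.2, y) ∈ E) then (1:ℝ) else 0
        from (Finset.sum_boole _ _).symm]
    refine Finset.sum_congr rfl fun y _ => ?_
    rw [hind]
    dsimp only
    exact drc_ite2 _ _
  have hcod_nonneg : ∀ p : A × A, 0 ≤ cod p := by
    intro p
    rw [← hcod_card p]
    exact Nat.cast_nonneg _
  -- (5) total degree
  have hdegsum : ∑ x : A, ∑ y : B, ind x y = (E.card : ℝ) := by
    rw [show (∑ x : A, ∑ y : B, ind x y) = ∑ p : A × B, ind p.1 p.2
      from (Fintype.sum_prod_type (f := fun p : A × B => ind p.1 p.2)).symm]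
    rw [show (∑ p : A × B, ind p.1 p.2) = ∑ p : A × B, if p ∈ E then (1:ℝ) else 0 by
      refine Finset.sum_congr rfl fun p _ => ?_
      rw [hind]]
    rw [Finset.sum_boole]
    simp [Finset.filter_univ_mem]
  -- (6) sum over tuples of card squared
  have hS2sum : ∑ t : B × B × B × B, ((St t).card : ℝ) ^ 2 = ∑ p : A × A, cod p ^ 4 := by
    rw [show (∑ t : B × B × B × B, ((St t).card : ℝ) ^ 2)
        = ∑ t : B × B × B × B, ∑ p : A × A, I p.1 t * I p.2 t by
      refine Finset.sum_congr rfl fun t _ => ?_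
      rw [card_St t, sq, Finset.sum_mul_sum]
      exact (Fintype.sum_prod_type (f := fun p : A × A => I p.1 t * I p.2 t)).symm]
    rw [Finset.sum_comm]
    exact Finset.sum_congr rfl fun p _ => sum_II p
  -- (7) sum over tuples of card
  have hSsum : ∑ t : B × B × B × B, ((St t).card : ℝ) = ∑ x : A, (∑ y : B, ind x y) ^ 4 := by
    rw [show (∑ t : B × B × B × B, ((St t).card : ℝ))
        = ∑ t : B × B × B × B, ∑ x : A, I x t from Finset.sum_congr rfl fun t _ => card_St t]
    rw [Finset.sum_comm]
    exact Finset.sum_congr rfl fun x _ => sum_I x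
  -- (8) sum of bad counts
  have hbad : ∀ t, ((((St t) ×ˢ (St t)).filter P).card : ℝ)
      = ∑ p : A × A, (if P p then (1:ℝ) else 0) * (I p.1 t * I p.2 t) := by
    intro t
    have hfe : ((St t) ×ˢ (St t)).filter P
        = Finset.univ.filter (fun p : A × A => P p ∧ p.1 ∈ St t ∧ p.2 ∈ St t) := by
      ext p
      simp only [Finset.mem_filter, Finset.mem_product, Finset.mem_univ, true_and]
      tauto
    rw [hfe]
    rw [show ((Finset.univ.filter (fun p : A × A => P p ∧ p.1 ∈ St t ∧ p.2 ∈ St t)).card : ℝ)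
        = ∑ p : A × A, if (P p ∧ p.1 ∈ St t ∧ p.2 ∈ St t) then (1:ℝ) else 0
        from (Finset.sum_boole _ _).symm]
    refine Finset.sum_congr rfl fun p _ => ?_
    rw [← hmemSt p.1 t, ← hmemSt p.2 t]
    exact drc_ite3 _ _ _
  have hbadsum : ∑ t : B × B × B × B, ((((St t) ×ˢ (St t)).filter P).card : ℝ)
      = ∑ p : A × A, (if P p then (1:ℝ) else 0) * cod p ^ 4 := by
    rw [show (∑ t : B × B × B × B, ((((St t) ×ˢ (St t)).filter P).card : ℝ))
        = ∑ t : B × B × B × B, ∑ p : A × A, (if P p then (1:ℝ) else 0) * (I p.1 t * I p.2 t)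
        from Finset.sum_congr rfl fun t _ => hbad t]
    rw [Finset.sum_comm]
    refine Finset.sum_congr rfl fun p _ => ?_
    rw [← Finset.mul_sum, sum_II p]
  -- (9) upper bound on bad sum
  have hbad_le : ∑ t : B × B × B × B, ((((St t) ×ˢ (St t)).filter P).card : ℝ)
      ≤ a ^ 2 * (ε ^ 3 * b) ^ 4 := by
    rw [hbadsum]
    calc ∑ p : A × A, (if P p then (1:ℝ) else 0) * cod p ^ 4
        ≤ ∑ _p : A × A, (ε ^ 3 * b) ^ 4 := by
          refine Finset.sum_le_sum fun p _ => ?_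
          by_cases hp : P p
          · rw [if_pos hp, one_mul]
            have h1 : cod p < ε ^ 3 * b := by rw [← hcod_card p]; exact hp
            exact pow_le_pow_left₀ (hcod_nonneg p) h1.le 4
          · rw [if_neg hp, zero_mul]
            positivity
      _ = a ^ 2 * (ε ^ 3 * b) ^ 4 := by
          rw [Finset.sum_const, Finset.card_univ, Fintype.card_prod, nsmul_eq_mul]
          push_cast [ha]
          ring
  -- (10) lower bound on sum of card squared
  have hdeg_lb : ε ^ 4 * a * b ^ 4 ≤ ∑ x : A, (∑ y : B, ind x y) ^ 4 := by
    have h1 : ε * a * b ≤ ∑ x : A, ∑ y : B, ind x y := by rw [hdegsum]; exact hE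
    have h2 : (0:ℝ) ≤ ε * a * b := by positivity
    have h3 : (ε * a * b) ^ 4 ≤ (∑ x : A, ∑ y : B, ind x y) ^ 4 :=
      pow_le_pow_left₀ h2 h1 4
    have h4 : (∑ x : A, ∑ y : B, ind x y) ^ 4 / a ^ 3 ≤ ∑ x : A, (∑ y : B, ind x y) ^ 4 := by
      have := pow_sum_div_card_le_sum_pow (s := (Finset.univ : Finset A))
        (f := fun x => ∑ y : B, ind x y)
        (fun i _ => Finset.sum_nonneg fun y _ => hind_nonneg i y) 3
      simpa [ha] using this
    have h5 : (ε * a * b) ^ 4 / a ^ 3 ≤ (∑ x : A, ∑ y : B, ind x y) ^ 4 / a ^ 3 := by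
      gcongr
    have h6 : (ε * a * b) ^ 4 / a ^ 3 = ε ^ 4 * a * b ^ 4 := by
      field_simp
    linarith
  have hS2_lb : ε ^ 8 * a ^ 2 * b ^ 4 ≤ ∑ t : B × B × B × B, ((St t).card : ℝ) ^ 2 := by
    have h1 : ε ^ 4 * a * b ^ 4 ≤ ∑ t : B × B × B × B, ((St t).card : ℝ) := by
      rw [hSsum]; exact hdeg_lb
    have h2 : (0:ℝ) ≤ ε ^ 4 * a * b ^ 4 := by positivity
    have h3 : (ε ^ 4 * a * b ^ 4) ^ 2 ≤ (∑ t : B × B × B × B, ((St t).card : ℝ)) ^ 2 :=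
      pow_le_pow_left₀ h2 h1 2
    have h4 : (∑ t : B × B × B × B, ((St t).card : ℝ)) ^ 2 / b ^ 4
        ≤ ∑ t : B × B × B × B, ((St t).card : ℝ) ^ 2 := by
      have := pow_sum_div_card_le_sum_pow (s := (Finset.univ : Finset (B × B × B × B)))
        (f := fun t => ((St t).card : ℝ)) (fun i _ => Nat.cast_nonneg _) 1
      have hcard : ((Finset.univ : Finset (B × B × B × B)).card : ℝ) = b ^ 4 := by
        rw [Finset.card_univ]
        push_cast [Fintype.card_prod, hb]
        ring
      rw [hcard] at this
      simpa using this
    have h5 : (ε ^ 4 * a * b ^ 4) ^ 2 / b ^ 4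
        ≤ (∑ t : B × B × B × B, ((St t).card : ℝ)) ^ 2 / b ^ 4 := by
      gcongr
    have h6 : (ε ^ 4 * a * b ^ 4) ^ 2 / b ^ 4 = ε ^ 8 * a ^ 2 * b ^ 4 := by
      field_simp
    linarith
  -- (11) averaging
  have key : ∑ _t : B × B × B × B, ((1:ℝ)/2 * ε ^ 8 * a ^ 2)
      ≤ ∑ t : B × B × B × B, (((St t).card : ℝ) ^ 2
          - ((((St t) ×ˢ (St t)).filter P).card : ℝ) / δ) := by
    rw [Finset.sum_sub_distrib, ← Finset.sum_div, Finset.sum_const, Finset.card_univ,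
      nsmul_eq_mul]
    have hcard : ((Fintype.card (B × B × B × B)) : ℝ) = b ^ 4 := by
      push_cast [Fintype.card_prod, hb]
      ring
    rw [hcard]
    have hdiv : (∑ t : B × B × B × B, ((((St t) ×ˢ (St t)).filter P).card : ℝ)) / δ
        ≤ (1:ℝ)/2 * ε ^ 8 * a ^ 2 * b ^ 4 := by
      rw [div_le_iff₀ hδ]
      have h1 : (∑ t : B × B × B × B, ((((St t) ×ˢ (St t)).filter P).card : ℝ))
          ≤ a ^ 2 * (ε ^ 3 * b) ^ 4 := hbad_le
      have h2 : a ^ 2 * (ε ^ 3 * b) ^ 4 ≤ (1:ℝ)/2 * ε ^ 8 * a ^ 2 * b ^ 4 * δ := by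
        have h3 : (0:ℝ) ≤ (1:ℝ)/2 * ε ^ 8 * a ^ 2 * b ^ 4 := by positivity
        nlinarith
      linarith
    linarith
  have hne : Nonempty (B × B × B × B) := inferInstance
  obtain ⟨t, -, ht⟩ := Finset.exists_le_of_sum_le Finset.univ_nonempty key
  refine ⟨St t, ?_, ?_⟩
  · -- size bound
    have hbd : (0:ℝ) ≤ ((((St t) ×ˢ (St t)).filter P).card : ℝ) / δ :=
      div_nonneg (Nat.cast_nonneg _) hδ.le
    have hpos : (0:ℝ) ≤ ε ^ 8 * a ^ 2 := by positivity
    have hsq : ((1:ℝ)/2 * ε ^ 4 * a) ^ 2 ≤ ((St t).card : ℝ) ^ 2 := by nlinarith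
    have h1 : (0:ℝ) ≤ (1:ℝ)/2 * ε ^ 4 * a := by positivity
    exact (pow_le_pow_iff_left₀ h1 (Nat.cast_nonneg _) (by norm_num)).mp hsq
  · -- bad pairs bound
    show ((((St t) ×ˢ (St t)).filter P).card : ℝ) ≤ δ * ((St t).card : ℝ) ^ 2
    have hpos : (0:ℝ) ≤ ε ^ 8 * a ^ 2 := by positivity
    have h1 : ((((St t) ×ˢ (St t)).filter P).card : ℝ) / δ ≤ ((St t).card : ℝ) ^ 2 := by
      nlinarith
    rw [div_le_iff₀ hδ] at h1
    linarith
end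

section
/- Fix positive integers $r,\Delta$ and a sequence of graphs $\mathcal{F}=\{F_1,F_2,\dots\}$ where $F_i$ has $i$ vertices, is bipartite, and has maximum degree at most $\Delta$. If $n\geq 32\Delta r^\Delta k$, then any $r$-edge-colouring of the complete graph $K_n$ contains a monochromatic copy of $F_k$. -/
open Finset

namespace Stmt3

variable {n : ℕ} (nb : Fin n → Finset (Fin n)) (k Δ : ℕ)

/-- common neighbourhood of a finite set of vertices -/
def N (S : Finset (Fin n)) : Finset (Fin n) := univ.filter fun u => ∀ w ∈ S, u ∈ nb w

def cn (S : Finset (Fin n)) : ℕ := (N nb S).card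

/-- number of "bad" Δ-subsets of `U` containing `T` -/
def bd (U T : Finset (Fin n)) : ℕ :=
  ((U.powersetCard Δ).filter fun S => T ⊆ S ∧ cn nb S < k).card

def Safe (U T : Finset (Fin n)) : Prop :=
  T ⊆ U ∧ 2 * (4*Δ)^(Δ - T.card) * bd nb k Δ U T ≤ (U.card - T.card).choose (Δ - T.card)

instance (U T : Finset (Fin n)) : Decidable (Safe nb k Δ U T) := by
  unfold Safe; infer_instance

def Uof (v : Fin Δ → Fin n) : Finset (Fin n) := univ.filter fun u => ∀ i, u ∈ nb (v i)

lemma exists_mem_not_mem {α : Type*} {s t : Finset α} (h : s.card < t.card) :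
    ∃ x ∈ t, x ∉ s :=
  Finset.not_subset.1 (fun hsub => absurd (Finset.card_le_card hsub) (by omega))

lemma N_anti {S T : Finset (Fin n)} (h : T ⊆ S) : N nb S ⊆ N nb T := by
  intro u hu
  simp only [N, mem_filter, mem_univ, true_and] at hu ⊢
  exact fun w hw => hu w (h hw)

/-- counting supersets of a fixed set inside `U` -/
lemma card_supersets {U T : Finset (Fin n)} (hTU : T ⊆ U) (hTd : T.card ≤ Δ) :
    ((U.powersetCard Δ).filter fun S => T ⊆ S).card
      = (U.card - T.card).choose (Δ - T.card) := by
  classical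
  have : ((U.powersetCard Δ).filter fun S => T ⊆ S).card
      = ((U \ T).powersetCard (Δ - T.card)).card := by
    apply Finset.card_bij' (fun S _ => S \ T) (fun S' _ => S' ∪ T)
    · intro S hS
      simp only [mem_filter, Finset.mem_powersetCard] at hS
      obtain ⟨⟨hSU, hScard⟩, hTS⟩ := hS
      rw [Finset.mem_powersetCard]
      constructor
      · intro x hx
        simp only [Finset.mem_sdiff] at hx ⊢
        exact ⟨hSU hx.1, hx.2⟩
      · rw [Finset.card_sdiff_of_subset hTS, hScard]
    · intro S' hS'
      rw [Finset.mem_powersetCard] at hS'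
      obtain ⟨hS'U, hcard⟩ := hS'
      have hdisj : Disjoint S' T := by
        refine Finset.disjoint_left.2 fun x hx hxT => ?_
        exact (Finset.mem_sdiff.1 (hS'U hx)).2 hxT
      simp only [mem_filter, Finset.mem_powersetCard]
      refine ⟨⟨?_, ?_⟩, Finset.subset_union_right⟩
      · intro x hx
        rcases Finset.mem_union.1 hx with h | h
        · exact (Finset.mem_sdiff.1 (hS'U h)).1
        · exact hTU h
      · rw [Finset.card_union_of_disjoint hdisj, hcard]
        omega
    · intro S hS
      simp only [mem_filter] at hS
      exact Finset.sdiff_union_of_subset hS.2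
    · intro S' hS'
      rw [Finset.mem_powersetCard] at hS'
      have hdisj : Disjoint S' T := by
        refine Finset.disjoint_left.2 fun x hx hxT => ?_
        exact (Finset.mem_sdiff.1 (hS'.1 hx)).2 hxT
      rw [Finset.union_sdiff_distrib, Finset.sdiff_self, Finset.union_empty,
        Finset.sdiff_eq_self_of_disjoint hdisj]
  rw [this, Finset.card_powersetCard, Finset.card_sdiff_of_subset hTU]

/-- double counting: summing bad extensions -/
lemma sum_bd_insert {U T : Finset (Fin n)} (hTU : T ⊆ U) (hTd : T.card ≤ Δ) :
    ∑ x ∈ U \ T, bd nb k Δ U (insert x T) = (Δ - T.card) * bd nb k Δ U T := by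
  classical
  have hstep : ∀ x ∈ U \ T, bd nb k Δ U (insert x T) =
      (((U.powersetCard Δ).filter fun S => T ⊆ S ∧ cn nb S < k).filter
        fun S => x ∈ S).card := by
    intro x hx
    unfold bd
    congr 1
    rw [Finset.filter_filter]
    apply Finset.filter_congr
    intro S hS
    simp only [Finset.insert_subset_iff]
    tauto
  rw [Finset.sum_congr rfl hstep]
  have : ∀ S ∈ (U.powersetCard Δ).filter (fun S => T ⊆ S ∧ cn nb S < k),
      ((U \ T).filter fun x => x ∈ S).card = Δ - T.card := by
    intro S hS
    simp only [mem_filter, Finset.mem_powersetCard] at hS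
    have : (U \ T).filter (fun x => x ∈ S) = S \ T := by
      ext x
      simp only [mem_filter, Finset.mem_sdiff]
      constructor
      · rintro ⟨⟨_, hxT⟩, hxS⟩; exact ⟨hxS, hxT⟩
      · rintro ⟨hxS, hxT⟩; exact ⟨⟨hS.1.1 hxS, hxT⟩, hxS⟩
    rw [this, Finset.card_sdiff_of_subset hS.2.1, hS.1.2]
  calc ∑ x ∈ U \ T, (((U.powersetCard Δ).filter fun S => T ⊆ S ∧ cn nb S < k).filter
        fun S => x ∈ S).card
      = ∑ x ∈ U \ T, ∑ S ∈ (U.powersetCard Δ).filter (fun S => T ⊆ S ∧ cn nb S < k),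
          if x ∈ S then 1 else 0 := by
        refine Finset.sum_congr rfl fun x _ => ?_
        rw [Finset.card_filter]
    _ = ∑ S ∈ (U.powersetCard Δ).filter (fun S => T ⊆ S ∧ cn nb S < k),
          ∑ x ∈ U \ T, if x ∈ S then 1 else 0 := Finset.sum_comm
    _ = ∑ S ∈ (U.powersetCard Δ).filter (fun S => T ⊆ S ∧ cn nb S < k), (Δ - T.card) := by
        refine Finset.sum_congr rfl fun S hS => ?_
        rw [← Finset.card_filter]
        exact this S hS
    _ = (Δ - T.card) * bd nb k Δ U T := by
        rw [Finset.sum_const, smul_eq_mul, mul_comm]; rfl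


/-- bound on the number of unsafe extensions -/
lemma unsafe_card {U T : Finset (Fin n)} (hΔ : 0 < Δ) (hd : T.card < Δ) (hΔX : Δ ≤ U.card)
    (hsafe : Safe nb k Δ U T) :
    4 * Δ * ((U \ T).filter fun x => ¬ Safe nb k Δ U (insert x T)).card < U.card - T.card := by
  classical
  obtain ⟨hTU, hineq⟩ := hsafe
  set d := T.card with hdd
  set X := U.card with hXX
  set C' := (X - d - 1).choose (Δ - d - 1) with hC'
  have hC'pos : 1 ≤ C' := Nat.choose_pos (by omega)
  -- each unsafe x has large bd
  have hkey : ∀ x ∈ (U \ T).filter (fun x => ¬ Safe nb k Δ U (insert x T)),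
      C' + 1 ≤ 2 * (4*Δ)^(Δ - d - 1) * bd nb k Δ U (insert x T) := by
    intro x hx
    simp only [mem_filter, Finset.mem_sdiff] at hx
    obtain ⟨⟨hxU, hxT⟩, hxuns⟩ := hx
    have hins : insert x T ⊆ U := Finset.insert_subset hxU hTU
    have hcard : (insert x T).card = d + 1 := by rw [Finset.card_insert_of_notMem hxT]
    unfold Safe at hxuns
    push_neg at hxuns
    have := hxuns hins
    rw [hcard] at this
    have h1 : Δ - (d+1) = Δ - d - 1 := by omega
    have h2 : X - (d+1) = X - d - 1 := by omega
    rw [h1, h2] at this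
    omega
  have hsum : (C' + 1) * ((U \ T).filter fun x => ¬ Safe nb k Δ U (insert x T)).card
      ≤ 2 * (4*Δ)^(Δ - d - 1) * ((Δ - d) * bd nb k Δ U T) := by
    calc (C' + 1) * ((U \ T).filter fun x => ¬ Safe nb k Δ U (insert x T)).card
        = ∑ _x ∈ (U \ T).filter (fun x => ¬ Safe nb k Δ U (insert x T)), (C' + 1) := by
          rw [Finset.sum_const, smul_eq_mul, mul_comm]
      _ ≤ ∑ x ∈ (U \ T).filter (fun x => ¬ Safe nb k Δ U (insert x T)),
            2 * (4*Δ)^(Δ - d - 1) * bd nb k Δ U (insert x T) :=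
          Finset.sum_le_sum hkey
      _ ≤ ∑ x ∈ U \ T, 2 * (4*Δ)^(Δ - d - 1) * bd nb k Δ U (insert x T) :=
          Finset.sum_le_sum_of_subset (Finset.filter_subset _ _)
      _ = 2 * (4*Δ)^(Δ - d - 1) * ∑ x ∈ U \ T, bd nb k Δ U (insert x T) := by
          rw [Finset.mul_sum]
      _ = 2 * (4*Δ)^(Δ - d - 1) * ((Δ - d) * bd nb k Δ U T) := by
          rw [sum_bd_insert nb k Δ hTU (by omega)]
  -- multiply by 4Δ and use the safety of T
  have hmul : 4 * Δ * (2 * (4*Δ)^(Δ - d - 1) * ((Δ - d) * bd nb k Δ U T))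
      = (Δ - d) * (2 * (4*Δ)^(Δ - d) * bd nb k Δ U T) := by
    have : (4*Δ)^(Δ - d) = (4*Δ) * (4*Δ)^(Δ - d - 1) := by
      rw [← pow_succ']
      congr 1
      omega
    rw [this]; ring
  have hchoose : (Δ - d) * ((X - d).choose (Δ - d)) = (X - d) * C' := by
    have h1 : X - d = (X - d - 1) + 1 := by omega
    have h2 : Δ - d = (Δ - d - 1) + 1 := by omega
    rw [h1, h2, mul_comm ((Δ - d - 1 + 1)) _]
    rw [Nat.add_one_mul_choose_eq]
  have hfinal : 4 * Δ * ((C' + 1) * ((U \ T).filter fun x => ¬ Safe nb k Δ U (insert x T)).card)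
      ≤ (X - d) * C' := by
    calc 4 * Δ * ((C' + 1) * ((U \ T).filter fun x => ¬ Safe nb k Δ U (insert x T)).card)
        ≤ 4 * Δ * (2 * (4*Δ)^(Δ - d - 1) * ((Δ - d) * bd nb k Δ U T)) :=
          Nat.mul_le_mul_left _ hsum
      _ = (Δ - d) * (2 * (4*Δ)^(Δ - d) * bd nb k Δ U T) := hmul
      _ ≤ (Δ - d) * ((X - d).choose (Δ - d)) := Nat.mul_le_mul_left _ hineq
      _ = (X - d) * C' := hchoose
  have hXd : 0 < X - d := by omega
  nlinarith [hfinal, hC'pos, hXd]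


variable (nbF : Fin k → Finset (Fin k)) (A : Finset (Fin k)) (U : Finset (Fin n))

/-- From a safe full trace, the common neighbourhood is large. -/
lemma safe_cn_large {T : Finset (Fin n)} (hΔ : 0 < Δ) (hTd : T.card ≤ Δ) (hΔX : Δ ≤ U.card)
    (hsafe : Safe nb k Δ U T) : k ≤ cn nb T := by
  classical
  obtain ⟨hTU, hineq⟩ := hsafe
  have hcount := card_supersets (Δ := Δ) hTU hTd
  have hpos : 0 < (U.card - T.card).choose (Δ - T.card) := Nat.choose_pos (by omega)
  have hge : 1 ≤ (4*Δ)^(Δ - T.card) := Nat.one_le_pow _ _ (by omega)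
  have hbd : bd nb k Δ U T < ((U.powersetCard Δ).filter fun S => T ⊆ S).card := by
    rw [hcount]
    unfold bd at hineq ⊢
    nlinarith [hineq, hpos, hge]
  obtain ⟨S, hS, hSnot⟩ := exists_mem_not_mem hbd
  simp only [mem_filter] at hS
  have hgood : ¬ (cn nb S < k) := by
    intro hlt
    exact hSnot (Finset.mem_filter.2 ⟨hS.1, hS.2, hlt⟩)
  have : cn nb S ≤ cn nb T := Finset.card_le_card (N_anti nb (by exact hS.2))
  omega

lemma phaseB (hsymF : ∀ x y, x ∈ nbF y ↔ y ∈ nbF x) (hdegF : ∀ x, (nbF x).card ≤ Δ)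
    (hcross : ∀ x y, y ∈ nbF x → (x ∈ A ↔ y ∉ A))
    (hΔ : 0 < Δ) (hk : 0 < k) (hX : 2*k < U.card) (hΔX : Δ ≤ U.card)
    (ψ0 : Fin k → Fin n) (hinj0 : Set.InjOn ψ0 ↑A) (hU0 : ∀ a ∈ A, ψ0 a ∈ U)
    (hsafe0 : ∀ b, b ∉ A → Safe nb k Δ U ((nbF b).image ψ0)) :
    ∀ s : Finset (Fin k), (∀ y ∈ s, y ∉ A) →
      ∃ ψ : Fin k → Fin n, Set.InjOn ψ ↑(A ∪ s) ∧ (∀ a ∈ A, ψ a = ψ0 a) ∧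
        ∀ b ∈ s, ∀ z ∈ nbF b, ψ b ∈ nb (ψ z) := by
  classical
  intro s
  induction s using Finset.induction_on with
  | empty =>
    intro _
    exact ⟨ψ0, by simpa using hinj0, fun _ _ => rfl, by simp⟩
  | @insert b s hb ih =>
    intro hdisj
    have hbA : b ∉ A := hdisj b (Finset.mem_insert_self b s)
    have hsdisj : ∀ y ∈ s, y ∉ A := fun y hy => hdisj y (Finset.mem_insert_of_mem hy)
    obtain ⟨ψ, hinj, hagree0, hadj⟩ := ih hsdisj
    -- the trace of b
    have hnbA : nbF b ⊆ A := by
      intro z hz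
      by_contra hzA
      exact hbA ((hcross b z hz).2 hzA)
    set T : Finset (Fin n) := (nbF b).image ψ0 with hT
    have hTd : T.card ≤ Δ := le_trans Finset.card_image_le (hdegF b)
    have hcn : k ≤ cn nb T :=
      safe_cn_large nb k Δ U hΔ hTd hΔX (hsafe0 b hbA)
    -- pick an unused common neighbour
    have hused : ((A ∪ s).image ψ).card < k := by
      have h1 : ((A ∪ s).image ψ).card ≤ (A ∪ s).card := Finset.card_image_le
      have h2 : A ∪ s ⊆ Finset.univ.erase b := by
        intro z hz
        refine Finset.mem_erase.2 ⟨?_, Finset.mem_univ z⟩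
        rintro rfl
        rcases Finset.mem_union.1 hz with h | h
        · exact hbA h
        · exact hb h
      have h3 := Finset.card_le_card h2
      have h4 : (Finset.univ.erase b).card = k - 1 := by
        rw [Finset.card_erase_of_mem (Finset.mem_univ b), Finset.card_univ, Fintype.card_fin]
      omega
    obtain ⟨y, hyN, hyused⟩ : ∃ y ∈ N nb T, y ∉ (A ∪ s).image ψ := by
      apply exists_mem_not_mem
      unfold cn at hcn
      omega
    set ψ' : Fin k → Fin n := Function.update ψ b y with hψ'
    have hagree : ∀ z, z ≠ b → ψ' z = ψ z := fun z hz => Function.update_of_ne hz _ _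
    have hpsib : ψ' b = y := by rw [hψ']; exact Function.update_self _ _ _
    have hAne : ∀ a ∈ A, a ≠ b := fun a haA h => hbA (h ▸ haA)
    have hsne : ∀ a ∈ s, a ≠ b := fun a has h => hb (h ▸ has)
    refine ⟨ψ', ?_, ?_, ?_⟩
    · -- injectivity on A ∪ insert b s
      intro p hp q hq hpq
      simp only [Finset.coe_union, Finset.coe_insert, Set.mem_union, Finset.mem_coe,
        Set.mem_insert_iff] at hp hq
      have hmem : ∀ z, (z ∈ A ∨ z = b ∨ z ∈ s) → z ≠ b → z ∈ A ∪ s := by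
        intro z hz hzb
        rcases hz with h | h | h
        · exact Finset.mem_union_left _ h
        · exact absurd h hzb
        · exact Finset.mem_union_right _ h
      by_cases hpb : p = b <;> by_cases hqb : q = b
      · rw [hpb, hqb]
      · exfalso
        apply hyused
        have hqAs : q ∈ A ∪ s := hmem q (by tauto) hqb
        rw [hpb, hpsib] at hpq
        rw [hagree q hqb] at hpq
        exact Finset.mem_image.2 ⟨q, hqAs, hpq.symm⟩
      · exfalso
        apply hyused
        have hpAs : p ∈ A ∪ s := hmem p (by tauto) hpb
        rw [hqb, hpsib] at hpq
        rw [hagree p hpb] at hpq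
        exact Finset.mem_image.2 ⟨p, hpAs, hpq⟩
      · have hpAs : p ∈ A ∪ s := hmem p (by tauto) hpb
        have hqAs : q ∈ A ∪ s := hmem q (by tauto) hqb
        rw [hagree p hpb, hagree q hqb] at hpq
        exact hinj (by exact_mod_cast hpAs) (by exact_mod_cast hqAs) hpq
    · intro a haA
      rw [hagree a (hAne a haA), hagree0 a haA]
    · intro b' hb' z hz
      rcases Finset.mem_insert.1 hb' with rfl | hb's
      · -- the new vertex
        have hzA : z ∈ A := hnbA hz
        have hzb : z ≠ b' := hAne z hzA
        rw [hpsib, hagree z hzb, hagree0 z hzA]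
        simp only [N, mem_filter] at hyN
        exact hyN.2 (ψ0 z) (Finset.mem_image.2 ⟨z, hz, rfl⟩)
      · -- old vertices
        have hzA : z ∈ A := by
          by_contra hzA
          exact (hsdisj b' hb's) ((hcross b' z hz).2 hzA)
        rw [hagree b' (hsne b' hb's), hagree z (hAne z hzA)]
        exact hadj b' hb's z hz


lemma phaseA (hsymF : ∀ x y, x ∈ nbF y ↔ y ∈ nbF x) (hdegF : ∀ x, (nbF x).card ≤ Δ)
    (hΔ : 0 < Δ) (hk : 0 < k) (hX : 2*k < U.card) (hΔX : Δ ≤ U.card)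
    (hbase : 2*(4*Δ)^Δ * bd nb k Δ U ∅ ≤ (U.card).choose Δ) :
    ∀ s : Finset (Fin k), s ⊆ A →
      ∃ ψ : Fin k → Fin n, Set.InjOn ψ ↑s ∧ (∀ a ∈ s, ψ a ∈ U) ∧
        ∀ b, b ∉ A → Safe nb k Δ U (((nbF b) ∩ s).image ψ) := by
  classical
  intro s
  induction s using Finset.induction_on with
  | empty =>
    intro _
    have hU0 : U.Nonempty := Finset.card_pos.1 (by omega)
    obtain ⟨u0, hu0⟩ := hU0
    refine ⟨fun _ => u0, ?_, ?_, ?_⟩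
    · simp [Set.InjOn]
    · simp
    · intro b _
      simp only [Finset.inter_empty, Finset.image_empty]
      exact ⟨Finset.empty_subset _, by simpa using hbase⟩
  | @insert a s ha ih =>
    intro hsub
    have hsA : s ⊆ A := fun y hy => hsub (Finset.mem_insert_of_mem hy)
    obtain ⟨ψ, hinj, hUmap, hsafe⟩ := ih hsA
    set X := U.card with hXdef
    -- the set of problematic neighbours of `a`
    set D : Finset (Fin k) := (nbF a).filter (fun b => b ∉ A) with hD
    have htrace : ∀ b ∈ D, ((nbF b ∩ s).image ψ) ⊆ U ∧ ((nbF b ∩ s).image ψ).card < Δ := by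
      intro b hb
      simp only [hD, mem_filter] at hb
      constructor
      · intro y hy
        simp only [Finset.mem_image] at hy
        obtain ⟨z, hz, rfl⟩ := hy
        exact hUmap z (Finset.mem_inter.1 hz).2
      · have hsubE : nbF b ∩ s ⊆ (nbF b).erase a := by
          intro z hz
          rcases Finset.mem_inter.1 hz with ⟨hz1, hz2⟩
          exact Finset.mem_erase.2 ⟨fun h => ha (by rw [← h]; exact hz2), hz1⟩
        have h1 : ((nbF b ∩ s).image ψ).card ≤ (nbF b ∩ s).card := Finset.card_image_le
        have h2 : (nbF b ∩ s).card ≤ ((nbF b).erase a).card := Finset.card_le_card hsubE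
        have hamem : a ∈ nbF b := (hsymF a b).2 hb.1
        have h3 : ((nbF b).erase a).card = (nbF b).card - 1 :=
          Finset.card_erase_of_mem hamem
        have h4 : (nbF b).card ≤ Δ := hdegF b
        have h5 : 0 < (nbF b).card := Finset.card_pos.2 ⟨a, hamem⟩
        omega
    -- unsafe sets
    set uns : Fin k → Finset (Fin n) := fun b =>
      (U \ ((nbF b ∩ s).image ψ)).filter
        (fun x => ¬ Safe nb k Δ U (insert x ((nbF b ∩ s).image ψ))) with huns
    have hunscard : ∀ b ∈ D, 4 * Δ * (uns b).card < X := by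
      intro b hb
      have h := unsafe_card nb k Δ hΔ (htrace b hb).2 hΔX (hsafe b (by
        simp only [hD, mem_filter] at hb; exact hb.2))
      rw [← hXdef] at h
      have h2 := Nat.sub_le X ((nbF b ∩ s).image ψ).card
      simp only [huns]
      omega
    set bigbad : Finset (Fin n) := (s.image ψ) ∪ D.biUnion uns with hbigbad
    have hDcard : D.card ≤ Δ := le_trans (Finset.card_le_card (Finset.filter_subset _ _)) (hdegF a)
    have hscard : s.card ≤ k - 1 := by
      have : s ⊆ Finset.univ.erase a := fun y hy =>
        Finset.mem_erase.2 ⟨fun h => ha (by rw [← h]; exact hy), Finset.mem_univ y⟩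
      have := Finset.card_le_card this
      have : (Finset.univ.erase a).card = k - 1 := by
        rw [Finset.card_erase_of_mem (Finset.mem_univ a), Finset.card_univ, Fintype.card_fin]
      omega
    have hbigcard : bigbad.card < X := by
      have h1 : bigbad.card ≤ s.card + ∑ b ∈ D, (uns b).card :=
        le_trans (Finset.card_union_le _ _)
          (by gcongr; exacts [Finset.card_image_le, Finset.card_biUnion_le])
      have h2 : 4 * Δ * (∑ b ∈ D, (uns b).card) ≤ Δ * (X - 1) := by
        calc 4 * Δ * (∑ b ∈ D, (uns b).card) = ∑ b ∈ D, 4 * Δ * (uns b).card := by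
              rw [Finset.mul_sum]
          _ ≤ ∑ _b ∈ D, (X - 1) := Finset.sum_le_sum (fun b hb => by
              have := hunscard b hb; omega)
          _ = D.card * (X - 1) := by rw [Finset.sum_const, smul_eq_mul]
          _ ≤ Δ * (X - 1) := Nat.mul_le_mul_right _ hDcard
      have h3 : 4 * (∑ b ∈ D, (uns b).card) ≤ X - 1 := by
        have := Nat.le_of_mul_le_mul_left (by
          calc Δ * (4 * (∑ b ∈ D, (uns b).card)) = 4 * Δ * (∑ b ∈ D, (uns b).card) := by ring
            _ ≤ Δ * (X - 1) := h2) hΔ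
        exact this
      omega
    obtain ⟨x, hxU, hxbad⟩ : ∃ x ∈ U, x ∉ bigbad := by
      by_contra hcon
      push_neg at hcon
      have : U ⊆ bigbad := hcon
      have := Finset.card_le_card this
      omega
    have hxim : x ∉ s.image ψ := fun h => hxbad (Finset.mem_union_left _ h)
    set ψ' : Fin k → Fin n := Function.update ψ a x with hψ'
    have hagree : ∀ y ∈ s, ψ' y = ψ y := by
      intro y hy
      exact Function.update_of_ne (fun h => ha (by rw [← h]; exact hy)) _ _
    have himagree : ∀ t : Finset (Fin k), t ⊆ s → t.image ψ' = t.image ψ := by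
      intro t ht
      exact Finset.image_congr (fun y hy => hagree y (ht hy))
    have hpsi_a : ψ' a = x := by rw [hψ']; exact Function.update_self _ _ _
    refine ⟨ψ', ?_, ?_, ?_⟩
    · -- injectivity
      intro p hp q hq hpq
      simp only [Finset.coe_insert, Set.mem_insert_iff, Finset.mem_coe] at hp hq
      rcases hp with rfl | hp <;> rcases hq with rfl | hq
      · rfl
      · exact absurd (Finset.mem_image.2 ⟨q, hq, by rw [← hagree q hq, ← hpq, hpsi_a]⟩) hxim
      · exact absurd (Finset.mem_image.2 ⟨p, hp, by rw [← hagree p hp, hpq, hpsi_a]⟩) hxim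
      · exact hinj hp hq (by rw [hagree p hp, hagree q hq] at hpq; exact hpq)
    · intro y hy
      rcases Finset.mem_insert.1 hy with rfl | hy
      · rw [hpsi_a]; exact hxU
      · rw [hagree y hy]; exact hUmap y hy
    · intro b hbA
      by_cases hba : b ∈ nbF a
      · have hbD : b ∈ D := Finset.mem_filter.2 ⟨hba, hbA⟩
        have hab : a ∈ nbF b := (hsymF a b).2 hba
        have hinter : nbF b ∩ insert a s = insert a (nbF b ∩ s) := by
          ext z
          simp only [Finset.mem_inter, Finset.mem_insert]
          constructor
          · rintro ⟨hz1, rfl | hz2⟩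
            · exact Or.inl rfl
            · exact Or.inr ⟨hz1, hz2⟩
          · rintro (rfl | ⟨hz1, hz2⟩)
            · exact ⟨hab, Or.inl rfl⟩
            · exact ⟨hz1, Or.inr hz2⟩
        rw [hinter, Finset.image_insert, himagree _ Finset.inter_subset_right, hpsi_a]
        -- x is not unsafe for b
        have hxT : x ∉ (nbF b ∩ s).image ψ := by
          intro hx
          apply hxim
          rcases Finset.mem_image.1 hx with ⟨z, hz, rfl⟩
          exact Finset.mem_image.2 ⟨z, (Finset.mem_inter.1 hz).2, rfl⟩
        have hxuns : x ∉ uns b := fun h =>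
          hxbad (Finset.mem_union_right _ (Finset.mem_biUnion.2 ⟨b, hbD, h⟩))
        simp only [huns, mem_filter, Finset.mem_sdiff, not_and, not_not] at hxuns
        exact hxuns ⟨hxU, hxT⟩
      · have hanb : a ∉ nbF b := fun h => hba ((hsymF b a).2 h)
        have hinter : nbF b ∩ insert a s = nbF b ∩ s := by
          ext z
          simp only [Finset.mem_inter, Finset.mem_insert]
          constructor
          · rintro ⟨hz1, rfl | hz2⟩
            · exact absurd hz1 hanb
            · exact ⟨hz1, hz2⟩
          · rintro ⟨hz1, hz2⟩
            exact ⟨hz1, Or.inr hz2⟩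
        rw [hinter, himagree _ Finset.inter_subset_right]
        exact hsafe b hbA


/-- number of tuples whose common neighbourhood contains `S` -/
lemma card_tuples (hsymnb : ∀ u w, u ∈ nb w ↔ w ∈ nb u) (S : Finset (Fin n)) :
    ((univ : Finset (Fin Δ → Fin n)).filter fun v => S ⊆ Uof nb Δ v).card
      = (cn nb S)^Δ := by
  classical
  have : ((univ : Finset (Fin Δ → Fin n)).filter fun v => S ⊆ Uof nb Δ v)
      = Fintype.piFinset (fun _ : Fin Δ => N nb S) := by
    ext v
    simp only [mem_filter, mem_univ, true_and, Fintype.mem_piFinset]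
    constructor
    · intro h i
      simp only [N, mem_filter, mem_univ, true_and]
      intro w hw
      have := h hw
      simp only [Uof, mem_filter, mem_univ, true_and] at this
      exact (hsymnb (v i) w).2 (this i)
    · intro h w hw
      simp only [Uof, mem_filter, mem_univ, true_and]
      intro i
      have := h i
      simp only [N, mem_filter, mem_univ, true_and] at this
      exact (hsymnb w (v i)).2 (this w hw)
  rw [this, Fintype.card_piFinset]
  simp [cn]

/-- main exchange of summation -/
lemma sum_filter_powerset (hsymnb : ∀ u w, u ∈ nb w ↔ w ∈ nb u)
    (P : Finset (Fin n) → Prop) [DecidablePred P] :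
    ∑ v : Fin Δ → Fin n, (((Uof nb Δ v).powersetCard Δ).filter P).card
      = ∑ S ∈ ((univ : Finset (Fin n)).powersetCard Δ).filter P, (cn nb S)^Δ := by
  classical
  have hsplit : ∀ v : Fin Δ → Fin n, ((Uof nb Δ v).powersetCard Δ).filter P
      = (((univ : Finset (Fin n)).powersetCard Δ).filter P).filter
          (fun S => S ⊆ Uof nb Δ v) := by
    intro v
    ext S
    simp only [mem_filter, Finset.mem_powersetCard]
    constructor
    · rintro ⟨⟨h1, h2⟩, h3⟩
      exact ⟨⟨⟨Finset.subset_univ _, h2⟩, h3⟩, h1⟩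
    · rintro ⟨⟨⟨_, h2⟩, h3⟩, h4⟩
      exact ⟨⟨h4, h2⟩, h3⟩
  calc ∑ v : Fin Δ → Fin n, (((Uof nb Δ v).powersetCard Δ).filter P).card
      = ∑ v : Fin Δ → Fin n, ∑ S ∈ ((univ : Finset (Fin n)).powersetCard Δ).filter P,
          if S ⊆ Uof nb Δ v then 1 else 0 := by
        refine Finset.sum_congr rfl fun v _ => ?_
        rw [hsplit v, Finset.card_filter]
    _ = ∑ S ∈ ((univ : Finset (Fin n)).powersetCard Δ).filter P,
          ∑ v : Fin Δ → Fin n, if S ⊆ Uof nb Δ v then 1 else 0 := Finset.sum_comm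
    _ = ∑ S ∈ ((univ : Finset (Fin n)).powersetCard Δ).filter P, (cn nb S)^Δ := by
        refine Finset.sum_congr rfl fun S _ => ?_
        rw [← Finset.card_filter]
        exact card_tuples nb Δ hsymnb S

/-- counting: sum of common neighbourhood sizes over all Δ-subsets -/
lemma sum_cn_eq (hsymnb : ∀ u w, u ∈ nb w ↔ w ∈ nb u) :
    ∑ S ∈ ((univ : Finset (Fin n)).powersetCard Δ), cn nb S
      = ∑ u : Fin n, ((nb u).card.choose Δ) := by
  classical
  calc ∑ S ∈ ((univ : Finset (Fin n)).powersetCard Δ), cn nb S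
      = ∑ S ∈ ((univ : Finset (Fin n)).powersetCard Δ), ∑ u : Fin n,
          if u ∈ N nb S then 1 else 0 := by
        refine Finset.sum_congr rfl fun S _ => ?_
        rw [cn, ← Finset.filter_univ_mem (N nb S), Finset.card_filter]
        simp
    _ = ∑ u : Fin n, ∑ S ∈ ((univ : Finset (Fin n)).powersetCard Δ),
          if u ∈ N nb S then 1 else 0 := Finset.sum_comm
    _ = ∑ u : Fin n, ((nb u).card.choose Δ) := by
        refine Finset.sum_congr rfl fun u _ => ?_
        rw [← Finset.card_filter]
        have : ((univ : Finset (Fin n)).powersetCard Δ).filter (fun S => u ∈ N nb S)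
            = (nb u).powersetCard Δ := by
          ext S
          simp only [mem_filter, Finset.mem_powersetCard, N, mem_univ, true_and]
          constructor
          · rintro ⟨⟨_, h2⟩, h3⟩
            refine ⟨?_, h2⟩
            intro w hw
            exact (hsymnb w u).2 (h3 w hw)
          · rintro ⟨h1, h2⟩
            exact ⟨⟨Finset.subset_univ _, h2⟩, fun w hw => (hsymnb u w).2 (h1 hw)⟩
        rw [this, Finset.card_powersetCard]

/-- selecting a good tuple -/
lemma exists_good_U (hsymnb : ∀ u w, u ∈ nb w ↔ w ∈ nb u) (hΔ : 0 < Δ)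
    (hnum : n^Δ * ((2*k).choose Δ)
        + 2*(4*Δ)^Δ * (∑ S ∈ ((univ : Finset (Fin n)).powersetCard Δ).filter
            (fun S => cn nb S < k), (cn nb S)^Δ)
      < ∑ S ∈ ((univ : Finset (Fin n)).powersetCard Δ), (cn nb S)^Δ) :
    ∃ U : Finset (Fin n), 2*k < U.card ∧
      2*(4*Δ)^Δ * bd nb k Δ U ∅ < U.card.choose Δ := by
  classical
  by_contra hcon
  push_neg at hcon
  -- every tuple fails
  have hall : ∀ v : Fin Δ → Fin n, (Uof nb Δ v).card.choose Δ
      ≤ (2*k).choose Δ + 2*(4*Δ)^Δ * bd nb k Δ (Uof nb Δ v) ∅ := by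
    intro v
    by_cases hc : 2*k < (Uof nb Δ v).card
    · have := hcon (Uof nb Δ v) hc
      omega
    · push_neg at hc
      have := Nat.choose_le_choose Δ hc
      omega
  have hsum := Finset.sum_le_sum (fun v (_ : v ∈ (univ : Finset (Fin Δ → Fin n))) => hall v)
  rw [Finset.sum_add_distrib, Finset.sum_const, Finset.card_univ] at hsum
  have hcard : Fintype.card (Fin Δ → Fin n) = n^Δ := by
    rw [Fintype.card_fun, Fintype.card_fin, Fintype.card_fin]
  rw [hcard] at hsum
  -- identify the two sums
  have hbdsum : ∑ v : Fin Δ → Fin n, bd nb k Δ (Uof nb Δ v) ∅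
      = ∑ S ∈ ((univ : Finset (Fin n)).powersetCard Δ).filter
          (fun S => cn nb S < k), (cn nb S)^Δ := by
    have : ∀ v : Fin Δ → Fin n, bd nb k Δ (Uof nb Δ v) ∅
        = (((Uof nb Δ v).powersetCard Δ).filter (fun S => cn nb S < k)).card := by
      intro v
      unfold bd
      congr 1
      apply Finset.filter_congr
      intro S _
      simp
    rw [Finset.sum_congr rfl (fun v _ => this v)]
    exact sum_filter_powerset nb Δ hsymnb _
  have hchsum : ∑ v : Fin Δ → Fin n, (Uof nb Δ v).card.choose Δ
      = ∑ S ∈ ((univ : Finset (Fin n)).powersetCard Δ), (cn nb S)^Δ := by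
    have : ∀ v : Fin Δ → Fin n, (Uof nb Δ v).card.choose Δ
        = (((Uof nb Δ v).powersetCard Δ).filter (fun _ => True)).card := by
      intro v
      rw [Finset.filter_true, Finset.card_powersetCard]
    rw [Finset.sum_congr rfl (fun v _ => this v)]
    rw [sum_filter_powerset nb Δ hsymnb (fun _ => True)]
    rw [Finset.filter_true]
  rw [hchsum, ← Finset.mul_sum, hbdsum, smul_eq_mul] at hsum
  omega


lemma cast_sub_ge (a b : ℕ) : (a:ℝ) - b ≤ ((a - b : ℕ) : ℝ) := by
  rcases le_total b a with h | h
  · rw [Nat.cast_sub h]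
  · have h1 : a - b = 0 := by omega
    rw [h1]
    have : (a:ℝ) ≤ b := by exact_mod_cast h
    simp only [Nat.cast_zero]
    linarith

lemma eight_sq_le_pow : ∀ m : ℕ, 8 * m^2 ≤ 9 * 2^m := by
  have aux : ∀ m : ℕ, 8 * (m+3)^2 ≤ 9 * 2^(m+3) := by
    intro m
    induction m with
    | zero => norm_num
    | succ p ih =>
      have e1 : 8 * (p+1+3)^2 = 8*p^2 + 64*p + 128 := by ring
      have e2 : 2 * (8 * (p+3)^2) = 16*p^2 + 96*p + 144 := by ring
      have h1 : 8 * (p+1+3)^2 ≤ 2 * (8 * (p+3)^2) := by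
        rw [e1, e2]; omega
      calc 8 * (p+1+3)^2 ≤ 2 * (8 * (p+3)^2) := h1
        _ ≤ 2 * (9 * 2^(p+3)) := by omega
        _ = 9 * 2^(p+1+3) := by ring
  intro m
  match m with
  | 0 => norm_num
  | 1 => norm_num
  | 2 => norm_num
  | (p+3) => exact aux p

set_option maxHeartbeats 1600000 in
/-- The numeric core inequality -/
lemma numeric (hsymnb : ∀ u w, u ∈ nb w ↔ w ∈ nb u)
    (hΔ : 0 < Δ) (hk : 0 < k) (hr : 2 ≤ r) (hn : 32*Δ*r^Δ*k ≤ n)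
    (hdeg_sum : n*(n-1) ≤ r * ∑ u : Fin n, (nb u).card) :
    n^Δ * ((2*k).choose Δ)
        + 2*(4*Δ)^Δ * (∑ S ∈ ((univ : Finset (Fin n)).powersetCard Δ).filter
            (fun S => cn nb S < k), (cn nb S)^Δ)
      < ∑ S ∈ ((univ : Finset (Fin n)).powersetCard Δ), (cn nb S)^Δ := by
  classical
  obtain ⟨D0, hD0⟩ : ∃ m, Δ = m + 1 := ⟨Δ - 1, by omega⟩
  -- basic positivity
  have hrΔ : 2^Δ ≤ r^Δ := Nat.pow_le_pow_left hr Δ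
  have hrΔpos : 0 < r^Δ := pow_pos (by omega) Δ
  have hΔr32 : Δ * r^Δ ≤ 32*Δ*r^Δ*k := by
    have h1 : Δ * r^Δ * 1 ≤ 32*Δ*r^Δ*k :=
      Nat.mul_le_mul (Nat.mul_le_mul_right _ (by omega)) hk
    simpa using h1
  have hΔr_le : Δ * r ≤ n := by
    calc Δ * r ≤ Δ * r^Δ := Nat.mul_le_mul_left Δ (Nat.le_self_pow (by omega) r)
      _ ≤ 32*Δ*r^Δ*k := hΔr32
      _ ≤ n := hn
  have hn0 : 0 < n := by
    have : 0 < 32*Δ*r^Δ*k :=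
      Nat.mul_pos (Nat.mul_pos (Nat.mul_pos (by omega) hΔ) hrΔpos) hk
    omega
  -- ℕ abbreviations
  set SS := ((univ : Finset (Fin n)).powersetCard Δ) with hSS
  set M := n.choose Δ with hM
  have hSScard : SS.card = M := by
    rw [hSS, Finset.card_powersetCard, Finset.card_univ, Fintype.card_fin]
  have hMpos : 0 < M := Nat.choose_pos (by
    calc Δ ≤ Δ * r := Nat.le_mul_of_pos_right Δ (by omega)
      _ ≤ n := hΔr_le)
  set badsum := ∑ S ∈ SS.filter (fun S => cn nb S < k), (cn nb S)^Δ with hbadsum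
  set Bsum := ∑ S ∈ SS, (cn nb S)^Δ with hBsum
  set Acn := ∑ S ∈ SS, cn nb S with hAcn
  set g : Fin n → ℕ := fun u => (nb u).card + 1 - Δ with hg
  set Tgt := n^Δ * ((2*k).choose Δ) + 2*(4*Δ)^Δ * badsum with hTgt
  -- ℕ facts
  have f1 : badsum ≤ M * (k-1)^Δ := by
    have h1 : ∀ S ∈ SS.filter (fun S => cn nb S < k), (cn nb S)^Δ ≤ (k-1)^Δ := by
      intro S hS
      have := (Finset.mem_filter.1 hS).2
      exact Nat.pow_le_pow_left (by omega) Δ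
    calc badsum ≤ (SS.filter (fun S => cn nb S < k)).card * (k-1)^Δ := by
          rw [hbadsum]
          exact Finset.sum_le_card_nsmul _ _ _ h1
      _ ≤ M * (k-1)^Δ := by
          have := Finset.card_le_card (Finset.filter_subset (fun S => cn nb S < k) SS)
          exact Nat.mul_le_mul_right _ (by omega)
  have f3 : ∀ u : Fin n, (g u)^Δ ≤ Δ.factorial * ((nb u).card.choose Δ) := by
    intro u
    calc (g u)^Δ = ((nb u).card + 1 - Δ)^Δ := rfl
      _ ≤ (nb u).card.descFactorial Δ := Nat.pow_sub_le_descFactorial _ _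
      _ = Δ.factorial * ((nb u).card.choose Δ) := Nat.descFactorial_eq_factorial_mul_choose _ _
  have f4 : Δ.factorial * M ≤ n^Δ := by
    rw [hM, ← Nat.descFactorial_eq_factorial_mul_choose]
    exact Nat.descFactorial_le_pow _ _
  have f5 : Δ.factorial * ((2*k).choose Δ) ≤ (2*k)^Δ := by
    rw [← Nat.descFactorial_eq_factorial_mul_choose]
    exact Nat.descFactorial_le_pow _ _
  -- target bound in ℕ
  have hTgtB : Δ.factorial * Tgt ≤ 3*(4*Δ*k)^Δ * n^Δ := by
    have h2k : (2*k)^Δ ≤ (4*Δ*k)^Δ := Nat.pow_le_pow_left (by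
      have : 1*(2*k) ≤ (2*Δ)*(2*k) := Nat.mul_le_mul_right _ (by omega)
      calc 2*k = 1*(2*k) := by ring
        _ ≤ (2*Δ)*(2*k) := this
        _ = 4*Δ*k := by ring) Δ
    have hk1 : (4*Δ)^Δ * (k-1)^Δ ≤ (4*Δ*k)^Δ := by
      have h2 : (4*Δ)^Δ * (k-1)^Δ = (4*Δ*(k-1))^Δ := (mul_pow _ _ _).symm
      have h3 : (4*Δ*(k-1))^Δ ≤ (4*Δ*k)^Δ :=
        Nat.pow_le_pow_left (Nat.mul_le_mul_left _ (Nat.sub_le _ _)) Δ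
      omega
    calc Δ.factorial * Tgt
        = n^Δ * (Δ.factorial * ((2*k).choose Δ)) + (2*(4*Δ)^Δ) * (Δ.factorial * badsum) := by
          rw [hTgt]; ring
      _ ≤ n^Δ * (2*k)^Δ + (2*(4*Δ)^Δ) * ((k-1)^Δ * (Δ.factorial * M)) := by
          have hb : Δ.factorial * badsum ≤ (k-1)^Δ * (Δ.factorial * M) := by
            calc Δ.factorial * badsum ≤ Δ.factorial * (M * (k-1)^Δ) :=
                  Nat.mul_le_mul_left _ f1
              _ = (k-1)^Δ * (Δ.factorial * M) := by ring
          exact Nat.add_le_add (Nat.mul_le_mul_left _ f5) (Nat.mul_le_mul_left _ hb)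
      _ ≤ n^Δ * (4*Δ*k)^Δ + (2*(4*Δ)^Δ) * ((k-1)^Δ * n^Δ) := by
          exact Nat.add_le_add (Nat.mul_le_mul_left _ h2k)
            (Nat.mul_le_mul_left _ (Nat.mul_le_mul_left _ f4))
      _ ≤ n^Δ * (4*Δ*k)^Δ + 2*(4*Δ*k)^Δ * n^Δ := by
          have h4 : (2*(4*Δ)^Δ) * ((k-1)^Δ * n^Δ) = 2*((4*Δ)^Δ * (k-1)^Δ) * n^Δ := by ring
          have h5 : 2*((4*Δ)^Δ * (k-1)^Δ) * n^Δ ≤ 2*(4*Δ*k)^Δ * n^Δ :=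
            Nat.mul_le_mul_right _ (Nat.mul_le_mul_left _ hk1)
          omega
      _ = 3*(4*Δ*k)^Δ * n^Δ := by ring
  -- now to the reals
  -- reals
  have hg_cast : ∀ u : Fin n, ((nb u).card : ℝ) + 1 - Δ ≤ (g u : ℝ) := by
    intro u
    have := cast_sub_ge ((nb u).card + 1) Δ
    push_cast at this ⊢
    linarith
  have hnR : (0:ℝ) < n := by exact_mod_cast hn0
  have hrR : (2:ℝ) ≤ r := by exact_mod_cast hr
  set Rg : ℝ := ∑ u : Fin n, (g u : ℝ) with hRg
  have hW : (n:ℝ) * ((n:ℝ) - Δ*r) ≤ r * Rg := by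
    have hA : (n:ℝ)*((n:ℝ)-1) ≤ r * ∑ u : Fin n, ((nb u).card : ℝ) := by
      have hc : ((n*(n-1) : ℕ) : ℝ) ≤ ((r * ∑ u : Fin n, (nb u).card : ℕ) : ℝ) := by
        exact_mod_cast hdeg_sum
      push_cast at hc
      rw [Nat.cast_sub (by omega)] at hc
      push_cast at hc
      linarith
    have hgsum : (∑ u : Fin n, ((nb u).card:ℝ)) + n - n*Δ ≤ Rg := by
      have h1 := Finset.sum_le_sum (fun u (_ : u ∈ (univ : Finset (Fin n))) => hg_cast u)
      have he : ∑ u : Fin n, (((nb u).card : ℝ) + 1 - (Δ:ℝ))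
          = (∑ u : Fin n, ((nb u).card:ℝ)) + n - n*Δ := by
        rw [Finset.sum_sub_distrib, Finset.sum_add_distrib, Finset.sum_const,
          Finset.sum_const, Finset.card_univ, Fintype.card_fin]
        push_cast
        ring
      rw [he] at h1
      exact h1
    have hr0 : (0:ℝ) ≤ r := by linarith
    have h2 : r * ((∑ u : Fin n, ((nb u).card:ℝ)) + n - n*Δ) ≤ r * Rg :=
      mul_le_mul_of_nonneg_left hgsum hr0
    nlinarith [h2, hA, hnR]
  set W : ℝ := (n:ℝ) * ((n:ℝ) - Δ*r) with hWdef
  have hW0 : (0:ℝ) ≤ (n:ℝ) - Δ*r := by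
    have : ((Δ*r : ℕ) : ℝ) ≤ (n:ℝ) := by exact_mod_cast hΔr_le
    push_cast at this
    linarith
  have hWge : 0 ≤ W := mul_nonneg (by positivity) hW0
  -- Jensen 1
  have hJ1 : Rg^Δ ≤ (n:ℝ)^D0 * ∑ u : Fin n, (g u:ℝ)^Δ := by
    have h := pow_sum_div_card_le_sum_pow (s := (univ : Finset (Fin n)))
      (f := fun u => (g u : ℝ)) (fun i _ => by positivity) D0
    rw [Finset.card_univ, Fintype.card_fin] at h
    have hpos : (0:ℝ) < (n:ℝ)^D0 := by positivity
    rw [div_le_iff₀ hpos] at h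
    rw [hD0]
    calc Rg^(D0+1) ≤ (∑ u : Fin n, (g u:ℝ)^(D0+1)) * (n:ℝ)^D0 := h
      _ = (n:ℝ)^D0 * ∑ u : Fin n, (g u:ℝ)^(D0+1) := mul_comm _ _
  have hgΔ : ∑ u : Fin n, (g u:ℝ)^Δ ≤ (Δ.factorial : ℝ) * (Acn:ℝ) := by
    have h1 : ∀ u ∈ (univ : Finset (Fin n)),
        (g u:ℝ)^Δ ≤ (Δ.factorial : ℝ) * (((nb u).card.choose Δ : ℕ) : ℝ) := by
      intro u _
      exact_mod_cast f3 u
    calc ∑ u : Fin n, (g u:ℝ)^Δ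
        ≤ ∑ u : Fin n, (Δ.factorial : ℝ) * (((nb u).card.choose Δ : ℕ) : ℝ) :=
          Finset.sum_le_sum h1
      _ = (Δ.factorial : ℝ) * ∑ u : Fin n, (((nb u).card.choose Δ : ℕ) : ℝ) := by
          rw [Finset.mul_sum]
      _ = (Δ.factorial : ℝ) * (Acn:ℝ) := by
          rw [hAcn, sum_cn_eq nb Δ hsymnb]
          push_cast
          ring
  have hAcn0 : (0:ℝ) ≤ (Acn:ℝ) := by positivity
  have hBr : (Bsum:ℝ) = ∑ S ∈ SS, ((cn nb S : ℕ):ℝ)^Δ := by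
    rw [hBsum]
    push_cast
    ring
  have hJ2 : (Acn:ℝ)^Δ ≤ (M:ℝ)^D0 * (Bsum:ℝ) := by
    have h := pow_sum_div_card_le_sum_pow (s := SS)
      (f := fun S => ((cn nb S : ℕ) : ℝ)) (fun i _ => by positivity) D0
    rw [hSScard] at h
    have hpos : (0:ℝ) < (M:ℝ)^D0 := by positivity
    rw [div_le_iff₀ hpos] at h
    have hAeq : (Acn:ℝ) = ∑ S ∈ SS, ((cn nb S : ℕ):ℝ) := by
      rw [hAcn]; push_cast; ring
    rw [hAeq, hBr, hD0]
    calc (∑ S ∈ SS, ((cn nb S : ℕ):ℝ))^(D0+1)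
        ≤ (∑ S ∈ SS, ((cn nb S : ℕ):ℝ)^(D0+1)) * (M:ℝ)^D0 := h
      _ = (M:ℝ)^D0 * ∑ S ∈ SS, ((cn nb S : ℕ):ℝ)^(D0+1) := mul_comm _ _
  -- combine
  have hfac0 : (0:ℝ) < (Δ.factorial : ℝ) := by exact_mod_cast Δ.factorial_pos
  have hWΔ : W^Δ ≤ ((r:ℝ)^Δ * (n:ℝ)^D0 * (Δ.factorial:ℝ)) * (Acn:ℝ) := by
    have hr0 : (0:ℝ) ≤ r := by linarith
    calc W^Δ ≤ ((r:ℝ) * Rg)^Δ := pow_le_pow_left₀ hWge hW Δ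
      _ = (r:ℝ)^Δ * Rg^Δ := mul_pow _ _ _
      _ ≤ (r:ℝ)^Δ * ((n:ℝ)^D0 * ∑ u : Fin n, (g u:ℝ)^Δ) := by
          apply mul_le_mul_of_nonneg_left hJ1 (by positivity)
      _ ≤ (r:ℝ)^Δ * ((n:ℝ)^D0 * ((Δ.factorial : ℝ) * (Acn:ℝ))) := by
          apply mul_le_mul_of_nonneg_left _ (by positivity)
          apply mul_le_mul_of_nonneg_left hgΔ (by positivity)
      _ = ((r:ℝ)^Δ * (n:ℝ)^D0 * (Δ.factorial:ℝ)) * (Acn:ℝ) := by ring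
  have hWΔΔ : W^(Δ*Δ) ≤ (((r:ℝ)^Δ * (n:ℝ)^D0 * (Δ.factorial:ℝ))^Δ * (M:ℝ)^D0) * (Bsum:ℝ) := by
    have h1 : (W^Δ)^Δ ≤ (((r:ℝ)^Δ * (n:ℝ)^D0 * (Δ.factorial:ℝ)) * (Acn:ℝ))^Δ :=
      pow_le_pow_left₀ (pow_nonneg hWge Δ) hWΔ Δ
    have h2 : (((r:ℝ)^Δ * (n:ℝ)^D0 * (Δ.factorial:ℝ)) * (Acn:ℝ))^Δ
        = ((r:ℝ)^Δ * (n:ℝ)^D0 * (Δ.factorial:ℝ))^Δ * (Acn:ℝ)^Δ := mul_pow _ _ _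
    have h3 : ((r:ℝ)^Δ * (n:ℝ)^D0 * (Δ.factorial:ℝ))^Δ * (Acn:ℝ)^Δ
        ≤ ((r:ℝ)^Δ * (n:ℝ)^D0 * (Δ.factorial:ℝ))^Δ * ((M:ℝ)^D0 * (Bsum:ℝ)) :=
      mul_le_mul_of_nonneg_left hJ2 (by positivity)
    calc W^(Δ*Δ) = (W^Δ)^Δ := by rw [← pow_mul]
      _ ≤ (((r:ℝ)^Δ * (n:ℝ)^D0 * (Δ.factorial:ℝ)) * (Acn:ℝ))^Δ := h1
      _ = ((r:ℝ)^Δ * (n:ℝ)^D0 * (Δ.factorial:ℝ))^Δ * (Acn:ℝ)^Δ := h2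
      _ ≤ ((r:ℝ)^Δ * (n:ℝ)^D0 * (Δ.factorial:ℝ))^Δ * ((M:ℝ)^D0 * (Bsum:ℝ)) := h3
      _ = (((r:ℝ)^Δ * (n:ℝ)^D0 * (Δ.factorial:ℝ))^Δ * (M:ℝ)^D0) * (Bsum:ℝ) := by ring
  -- collect the constant
  have hcollect : ((r:ℝ)^Δ * (n:ℝ)^D0 * (Δ.factorial:ℝ))^Δ * (M:ℝ)^D0
      ≤ (r:ℝ)^(Δ*Δ) * (n:ℝ)^(2*Δ*D0) * (Δ.factorial:ℝ) := by
    have hMd : (Δ.factorial:ℝ) * (M:ℝ) ≤ (n:ℝ)^Δ := by exact_mod_cast f4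
    have h1 : ((Δ.factorial:ℝ) * (M:ℝ))^D0 ≤ ((n:ℝ)^Δ)^D0 :=
      pow_le_pow_left₀ (by positivity) hMd D0
    have h2 : ((r:ℝ)^Δ * (n:ℝ)^D0 * (Δ.factorial:ℝ))^Δ * (M:ℝ)^D0
        = (r:ℝ)^(Δ*Δ) * ((n:ℝ)^D0)^Δ * (Δ.factorial:ℝ)^(D0+1) * (M:ℝ)^D0 := by
      rw [mul_pow, mul_pow, ← pow_mul, ← hD0]
    have h3 : (Δ.factorial:ℝ)^(D0+1) * (M:ℝ)^D0
        = (Δ.factorial:ℝ) * ((Δ.factorial:ℝ) * (M:ℝ))^D0 := by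
      rw [mul_pow]; ring
    calc ((r:ℝ)^Δ * (n:ℝ)^D0 * (Δ.factorial:ℝ))^Δ * (M:ℝ)^D0
        = (r:ℝ)^(Δ*Δ) * ((n:ℝ)^D0)^Δ * ((Δ.factorial:ℝ) * ((Δ.factorial:ℝ) * (M:ℝ))^D0) := by
          rw [h2]; rw [mul_assoc ((r:ℝ)^(Δ*Δ) * ((n:ℝ)^D0)^Δ), h3]
      _ ≤ (r:ℝ)^(Δ*Δ) * ((n:ℝ)^D0)^Δ * ((Δ.factorial:ℝ) * ((n:ℝ)^Δ)^D0) := by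
          apply mul_le_mul_of_nonneg_left _ (by positivity)
          exact mul_le_mul_of_nonneg_left h1 (by positivity)
      _ = (r:ℝ)^(Δ*Δ) * (n:ℝ)^(2*Δ*D0) * (Δ.factorial:ℝ) := by
          rw [← pow_mul, ← pow_mul]
          rw [show 2*Δ*D0 = D0*Δ + Δ*D0 from by ring, pow_add]
          ring
  have hWBsum : W^(Δ*Δ)
      ≤ ((r:ℝ)^(Δ*Δ) * (n:ℝ)^(2*Δ*D0) * (Δ.factorial:ℝ)) * (Bsum:ℝ) := by
    refine le_trans hWΔΔ ?_
    apply mul_le_mul_of_nonneg_right hcollect (by positivity)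
  -- Bernoulli / core inequality
  have hx128 : 128*(Δ*(Δ*(Δ*r))) ≤ 9*n := by
    have e1 : 8*Δ^2 ≤ 9*2^Δ := eight_sq_le_pow Δ
    have e2 : 2^D0 ≤ r^D0 := Nat.pow_le_pow_left hr D0
    have e3 : 2^D0 ≤ r^D0 * k := le_trans e2 (Nat.le_mul_of_pos_right _ hk)
    have e4 : 2^Δ ≤ 2 * (r^D0 * k) := by
      calc 2^Δ = 2 * 2^D0 := by rw [hD0, pow_succ]; ring
        _ ≤ 2 * (r^D0 * k) := Nat.mul_le_mul_left _ e3
    have e5 : 128*(Δ*(Δ*(Δ*r))) = 16*(Δ*r)*(8*Δ^2) := by ring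
    have e6 : 16*(Δ*r)*(8*Δ^2) ≤ 16*(Δ*r)*(9*2^Δ) := Nat.mul_le_mul_left _ e1
    have e7 : 16*(Δ*r)*(9*2^Δ) ≤ 16*(Δ*r)*(9*(2*(r^D0*k))) := by
      apply Nat.mul_le_mul_left
      exact Nat.mul_le_mul_left _ e4
    have e8 : 16*(Δ*r)*(9*(2*(r^D0*k))) = 9*(32*Δ*(r*r^D0)*k) := by ring
    have e9 : r*r^D0 = r^Δ := by rw [hD0, pow_succ]; ring
    calc 128*(Δ*(Δ*(Δ*r))) = 16*(Δ*r)*(8*Δ^2) := e5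
      _ ≤ 16*(Δ*r)*(9*2^Δ) := e6
      _ ≤ 16*(Δ*r)*(9*(2*(r^D0*k))) := e7
      _ = 9*(32*Δ*(r*r^D0)*k) := e8
      _ = 9*(32*Δ*r^Δ*k) := by rw [e9]
      _ ≤ 9*n := Nat.mul_le_mul_left _ hn
  set x : ℝ := ((Δ:ℝ)*r)/n with hxdef
  have hx0 : 0 ≤ x := by positivity
  have hx1 : x ≤ 1 := by
    rw [hxdef, div_le_one hnR]
    linarith [hW0]
  have hxsmall : ((Δ*Δ : ℕ):ℝ) * x ≤ 9/128 := by
    rw [hxdef]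
    rw [mul_div_assoc']
    rw [div_le_div_iff₀ hnR (by norm_num : (0:ℝ) < 128)]
    have : ((128*(Δ*(Δ*(Δ*r))) : ℕ) : ℝ) ≤ ((9*n : ℕ):ℝ) := by exact_mod_cast hx128
    push_cast at this
    push_cast
    linarith [this]
  have hBern : (119/128) * (n:ℝ)^(Δ*Δ) ≤ ((n:ℝ) - Δ*r)^(Δ*Δ) := by
    have hb := one_add_mul_le_pow (a := -x) (by linarith) (Δ*Δ)
    have h1 : (1:ℝ) - ((Δ*Δ:ℕ):ℝ)*x ≤ (1-x)^(Δ*Δ) := by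
      have he1 : (1:ℝ) + (Δ*Δ:ℕ)*(-x) = 1 - ((Δ*Δ:ℕ):ℝ)*x := by push_cast; ring
      have he2 : ((1:ℝ) + -x) = 1 - x := by ring
      rw [he1, he2] at hb
      exact hb
    have h2 : (119/128 : ℝ) ≤ (1-x)^(Δ*Δ) := by
      have := hxsmall
      linarith
    have hne : (n:ℝ) ≠ 0 := ne_of_gt hnR
    have h3 : ((n:ℝ) - Δ*r) = n * (1-x) := by
      rw [hxdef]
      field_simp
    rw [h3, mul_pow]
    have h4 : (0:ℝ) ≤ (n:ℝ)^(Δ*Δ) := by positivity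
    calc (119/128) * (n:ℝ)^(Δ*Δ) = (n:ℝ)^(Δ*Δ) * (119/128) := by ring
      _ ≤ (n:ℝ)^(Δ*Δ) * (1-x)^(Δ*Δ) := mul_le_mul_of_nonneg_left h2 h4
  have hnpowΔ : ((32*Δ*r^Δ*k : ℕ):ℝ)^Δ ≤ (n:ℝ)^Δ := by
    apply pow_le_pow_left₀ (by positivity)
    exact_mod_cast hn
  have hsmall : 3*((4*Δ*k:ℕ):ℝ)^Δ * ((r:ℝ)^Δ)^Δ < (119/128) * (n:ℝ)^Δ := by
    have h8 : (8:ℝ) ≤ (8:ℝ)^Δ := by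
      calc (8:ℝ) = 8^1 := (pow_one 8).symm
        _ ≤ 8^Δ := pow_le_pow_right₀ (by norm_num) (by omega)
    have hexp : ((32*Δ*r^Δ*k : ℕ):ℝ)^Δ = (8:ℝ)^Δ * ((4*Δ*k:ℕ):ℝ)^Δ * ((r:ℝ)^Δ)^Δ := by
      push_cast
      rw [← mul_pow, ← mul_pow]
      congr 1
      ring
    have hpos : (0:ℝ) < ((4*Δ*k:ℕ):ℝ)^Δ * ((r:ℝ)^Δ)^Δ := by
      have h4 : (0:ℕ) < 4*Δ*k := by positivity
      have : (0:ℝ) < ((4*Δ*k:ℕ):ℝ) := by exact_mod_cast h4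
      positivity
    set P : ℝ := ((4*Δ*k:ℕ):ℝ)^Δ * ((r:ℝ)^Δ)^Δ with hPdef
    have c1 : (3:ℝ) < (119/128) * 8 := by norm_num
    have step2 : ((119/128)*8) * P ≤ (119/128) * ((8:ℝ)^Δ * P) := by
      have h9 : (8:ℝ) * P ≤ (8:ℝ)^Δ * P := mul_le_mul_of_nonneg_right h8 hpos.le
      calc ((119/128)*8) * P = (119/128) * ((8:ℝ)*P) := by ring
        _ ≤ (119/128) * ((8:ℝ)^Δ*P) := by linarith
    calc 3*((4*Δ*k:ℕ):ℝ)^Δ * ((r:ℝ)^Δ)^Δ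
        = 3 * P := by rw [hPdef]; ring
      _ < ((119/128) * 8) * P := mul_lt_mul_of_pos_right c1 hpos
      _ ≤ (119/128) * ((8:ℝ)^Δ * P) := step2
      _ = (119/128) * (((32*Δ*r^Δ*k : ℕ):ℝ)^Δ) := by rw [hPdef, hexp]; ring
      _ ≤ (119/128) * (n:ℝ)^Δ := by linarith [hnpowΔ]
  -- the core strict inequality
  have hCore : ((r:ℝ)^(Δ*Δ) * (n:ℝ)^(2*Δ*D0)) * (3*((4*Δ*k:ℕ):ℝ)^Δ * (n:ℝ)^Δ)
      < W^(Δ*Δ) := by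
    have hWexp : W^(Δ*Δ) = (n:ℝ)^(Δ*Δ) * ((n:ℝ) - Δ*r)^(Δ*Δ) := by
      rw [hWdef, mul_pow]
    have hrpow : ((r:ℝ)^Δ)^Δ = (r:ℝ)^(Δ*Δ) := by rw [← pow_mul]
    have hnsplit : (n:ℝ)^(Δ*Δ) * (n:ℝ)^(Δ*Δ)
        = ((n:ℝ)^(2*Δ*D0) * (n:ℝ)^Δ) * (n:ℝ)^Δ := by
      rw [← pow_add, ← pow_add, ← pow_add]
      congr 1
      rw [hD0]
      ring
    have hstep : 3*((4*Δ*k:ℕ):ℝ)^Δ * (r:ℝ)^(Δ*Δ) * (n:ℝ)^Δ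
        < (119/128) * (n:ℝ)^Δ * (n:ℝ)^Δ := by
      have h := hsmall
      rw [hrpow] at h
      have hnn : (0:ℝ) < (n:ℝ)^Δ := by positivity
      calc 3*((4*Δ*k:ℕ):ℝ)^Δ * (r:ℝ)^(Δ*Δ) * (n:ℝ)^Δ
          = (3*((4*Δ*k:ℕ):ℝ)^Δ * (r:ℝ)^(Δ*Δ)) * (n:ℝ)^Δ := by ring
        _ < ((119/128) * (n:ℝ)^Δ) * (n:ℝ)^Δ := mul_lt_mul_of_pos_right h hnn
        _ = (119/128) * (n:ℝ)^Δ * (n:ℝ)^Δ := by ring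
    have hmono : (0:ℝ) < (n:ℝ)^(2*Δ*D0) := by positivity
    calc ((r:ℝ)^(Δ*Δ) * (n:ℝ)^(2*Δ*D0)) * (3*((4*Δ*k:ℕ):ℝ)^Δ * (n:ℝ)^Δ)
        = (n:ℝ)^(2*Δ*D0) * (3*((4*Δ*k:ℕ):ℝ)^Δ * (r:ℝ)^(Δ*Δ) * (n:ℝ)^Δ) := by ring
      _ < (n:ℝ)^(2*Δ*D0) * ((119/128) * (n:ℝ)^Δ * (n:ℝ)^Δ) := by
          exact mul_lt_mul_of_pos_left hstep hmono
      _ = (119/128) * ((n:ℝ)^(Δ*Δ) * (n:ℝ)^(Δ*Δ)) := by rw [hnsplit]; ring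
      _ = ((119/128) * (n:ℝ)^(Δ*Δ)) * (n:ℝ)^(Δ*Δ) := by ring
      _ ≤ ((n:ℝ) - Δ*r)^(Δ*Δ) * (n:ℝ)^(Δ*Δ) := by
          apply mul_le_mul_of_nonneg_right hBern (by positivity)
      _ = W^(Δ*Δ) := by rw [hWexp]; ring
  -- put everything together
  have hTgtR : ((r:ℝ)^(Δ*Δ) * (n:ℝ)^(2*Δ*D0) * (Δ.factorial:ℝ)) * (Tgt:ℝ)
      ≤ ((r:ℝ)^(Δ*Δ) * (n:ℝ)^(2*Δ*D0)) * (3*((4*Δ*k:ℕ):ℝ)^Δ * (n:ℝ)^Δ) := by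
    have h1 : (Δ.factorial:ℝ) * (Tgt:ℝ) ≤ 3*((4*Δ*k:ℕ):ℝ)^Δ * (n:ℝ)^Δ := by
      have := hTgtB
      have hc : ((Δ.factorial * Tgt : ℕ):ℝ) ≤ ((3*(4*Δ*k)^Δ * n^Δ : ℕ):ℝ) := by
        exact_mod_cast this
      push_cast at hc
      push_cast
      linarith
    calc ((r:ℝ)^(Δ*Δ) * (n:ℝ)^(2*Δ*D0) * (Δ.factorial:ℝ)) * (Tgt:ℝ)
        = ((r:ℝ)^(Δ*Δ) * (n:ℝ)^(2*Δ*D0)) * ((Δ.factorial:ℝ) * (Tgt:ℝ)) := by ring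
      _ ≤ ((r:ℝ)^(Δ*Δ) * (n:ℝ)^(2*Δ*D0)) * (3*((4*Δ*k:ℕ):ℝ)^Δ * (n:ℝ)^Δ) := by
          apply mul_le_mul_of_nonneg_left h1 (by positivity)
  have hfinalR : ((r:ℝ)^(Δ*Δ) * (n:ℝ)^(2*Δ*D0) * (Δ.factorial:ℝ)) * (Tgt:ℝ)
      < ((r:ℝ)^(Δ*Δ) * (n:ℝ)^(2*Δ*D0) * (Δ.factorial:ℝ)) * (Bsum:ℝ) :=
    lt_of_le_of_lt hTgtR (lt_of_lt_of_le hCore hWBsum)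
  have hDpos : (0:ℝ) < (r:ℝ)^(Δ*Δ) * (n:ℝ)^(2*Δ*D0) * (Δ.factorial:ℝ) := by
    have : (0:ℝ) < (r:ℝ) := by linarith
    positivity
  have hTB : (Tgt:ℝ) < (Bsum:ℝ) := lt_of_mul_lt_mul_left hfinalR (le_of_lt hDpos)
  exact_mod_cast hTB

end Stmt3
set_option maxHeartbeats 1600000 in
/-- Multicolour Ramsey bound for members of a bipartite Δ-bounded graph sequence. -/
theorem stmt_3 (r Δ : ℕ) (hr : 0 < r) (hΔ : 0 < Δ)
    (F : (i : ℕ) → SimpleGraph (Fin i))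
    (hbip : ∀ i, 1 ≤ i → (F i).Colorable 2)
    (hdeg : ∀ i, 1 ≤ i → ∀ v, ((F i).neighborSet v).ncard ≤ Δ)
    (k n : ℕ) (hk : 1 ≤ k) (hn : 32 * Δ * r ^ Δ * k ≤ n)
    (c : Fin n → Fin n → Fin r) (hsym : ∀ a b, c a b = c b a) :
    ∃ (col : Fin r) (f : Fin k ↪ Fin n),
      ∀ a b, (F k).Adj a b → c (f a) (f b) = col := by
  classical
  open Finset Stmt3 in
  rcases Nat.lt_or_ge r 2 with hr2 | hr2
  · -- trivial case r = 1
    interval_cases r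
    have hkn : k ≤ n := by
      have h1 : (1:ℕ)^Δ = 1 := one_pow Δ
      have h2 : 32*Δ*1*k ≤ n := by rw [← h1]; exact (by simpa using hn)
      have h3 : 1*1*k ≤ 32*Δ*1*k := Nat.mul_le_mul_right k (by omega)
      omega
    exact ⟨0, Fin.castLEEmb hkn, fun a b _ => Subsingleton.elim _ _⟩
  rcases Nat.lt_or_ge k 2 with hk2 | hk2
  · -- trivial case k = 1
    interval_cases k
    have h1n : 1 ≤ n := by
      have hp : 0 < 32*Δ*r^Δ*1 :=
        Nat.mul_pos (Nat.mul_pos (Nat.mul_pos (by omega) hΔ) (pow_pos (by omega) Δ)) (by omega)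
      omega
    refine ⟨⟨0, hr⟩, Fin.castLEEmb h1n, ?_⟩
    intro a b hab
    have hab2 : a = b := Subsingleton.elim a b
    rw [hab2] at hab
    exact absurd hab ((F 1).irrefl)
  -- main case
  set Δ' := min Δ (k-1) with hΔ'def
  have hΔ'pos : 0 < Δ' := by omega
  have hΔ'k : Δ' ≤ k - 1 := min_le_right _ _
  have hn' : 32*Δ'*r^Δ'*k ≤ n := by
    have hmono : Δ' * r^Δ' ≤ Δ * r^Δ :=
      Nat.mul_le_mul (min_le_left _ _) (Nat.pow_le_pow_right (by omega) (min_le_left _ _))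
    calc 32*Δ'*r^Δ'*k = 32*(Δ'*r^Δ')*k := by ring
      _ ≤ 32*(Δ*r^Δ)*k := Nat.mul_le_mul_right _ (Nat.mul_le_mul_left _ hmono)
      _ = 32*Δ*r^Δ*k := by ring
      _ ≤ n := hn
  letI : DecidableRel (F k).Adj := Classical.decRel _
  set nbF : Fin k → Finset (Fin k) := fun x => (F k).neighborFinset x with hnbF
  have hsymF : ∀ x y, x ∈ nbF y ↔ y ∈ nbF x := by
    intro x y
    simp only [hnbF, SimpleGraph.mem_neighborFinset]
    exact (F k).adj_comm y x
  have hdegF : ∀ x : Fin k, (nbF x).card ≤ Δ' := by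
    intro x
    have h1 : ((F k).neighborSet x).ncard ≤ Δ := hdeg k (by omega) x
    have h2 : ((F k).neighborSet x).ncard = ((F k).neighborFinset x).card := by
      rw [SimpleGraph.neighborFinset_def, Set.ncard_eq_toFinset_card']
    have h3 : (F k).neighborFinset x ⊆ univ.erase x := by
      intro y hy
      rw [SimpleGraph.mem_neighborFinset] at hy
      exact Finset.mem_erase.2 ⟨hy.ne', Finset.mem_univ y⟩
    have h4 := Finset.card_le_card h3
    rw [Finset.card_erase_of_mem (Finset.mem_univ x), Finset.card_univ, Fintype.card_fin] at h4
    simp only [hnbF]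
    omega
  -- bipartition
  obtain ⟨C⟩ := hbip k (by omega)
  set A : Finset (Fin k) := univ.filter (fun x => C x = 0) with hA
  have hcross : ∀ x y, y ∈ nbF x → (x ∈ A ↔ y ∉ A) := by
    intro x y hy
    simp only [hnbF, SimpleGraph.mem_neighborFinset] at hy
    have hne : C x ≠ C y := C.valid hy
    have hv : (C x).val ≠ (C y).val := fun h => hne (Fin.ext h)
    have h1 : (C x).val < 2 := (C x).isLt
    have h2 : (C y).val < 2 := (C y).isLt
    simp only [hA, Finset.mem_filter, Finset.mem_univ, true_and]
    rw [Fin.ext_iff, Fin.ext_iff]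
    simp only [Fin.val_zero]
    omega
  -- majority colour
  set nbc : Fin r → Fin n → Finset (Fin n) :=
    fun col u => univ.filter (fun w => w ≠ u ∧ c u w = col) with hnbc
  have hsum_col : ∀ u : Fin n, ∑ col : Fin r, (nbc col u).card = n - 1 := by
    intro u
    have hfib := Finset.card_eq_sum_card_fiberwise
      (f := fun w => c u w) (s := univ.filter (fun w => w ≠ u)) (t := (univ : Finset (Fin r)))
      (fun x _ => Finset.mem_univ _)
    have he : ∀ col : Fin r,
        ((univ.filter (fun w => w ≠ u)).filter (fun w => c u w = col)) = nbc col u := by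
      intro col
      rw [Finset.filter_filter]
    have hcard : (univ.filter (fun w => w ≠ u)).card = n - 1 := by
      rw [Finset.filter_ne', Finset.card_erase_of_mem (Finset.mem_univ u),
        Finset.card_univ, Fintype.card_fin]
    rw [← hcard, hfib]
    exact Finset.sum_congr rfl fun col _ => by rw [he col]
  have hpig : ∃ col : Fin r, n*(n-1) ≤ r * ∑ u : Fin n, (nbc col u).card := by
    have htot : ∑ col : Fin r, ∑ u : Fin n, (nbc col u).card = n*(n-1) := by
      rw [Finset.sum_comm]
      calc ∑ u : Fin n, ∑ col : Fin r, (nbc col u).card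
          = ∑ _u : Fin n, (n-1) := Finset.sum_congr rfl fun u _ => hsum_col u
        _ = n*(n-1) := by
            rw [Finset.sum_const, Finset.card_univ, Fintype.card_fin, smul_eq_mul]
    have hle : ∑ _col : Fin r, n*(n-1)
        ≤ ∑ col : Fin r, r * ∑ u : Fin n, (nbc col u).card := by
      have h2 : ∑ col : Fin r, r * ∑ u : Fin n, (nbc col u).card
          = r * ∑ col : Fin r, ∑ u : Fin n, (nbc col u).card :=
        (Finset.mul_sum _ _ _).symm
      rw [h2, htot, Finset.sum_const, Finset.card_univ, Fintype.card_fin, smul_eq_mul]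
    obtain ⟨col, _, hcol⟩ := Finset.exists_le_of_sum_le (f := fun _ : Fin r => n*(n-1))
      (g := fun col => r * ∑ u : Fin n, (nbc col u).card)
      ⟨⟨0, by omega⟩, Finset.mem_univ _⟩ hle
    exact ⟨col, hcol⟩
  obtain ⟨col, hcol⟩ := hpig
  set nb : Fin n → Finset (Fin n) := nbc col with hnb
  have hsymnb : ∀ u w, u ∈ nb w ↔ w ∈ nb u := by
    intro u w
    simp only [hnb, hnbc, Finset.mem_filter, Finset.mem_univ, true_and]
    constructor
    · rintro ⟨h1, h2⟩
      exact ⟨h1.symm, by rw [hsym]; exact h2⟩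
    · rintro ⟨h1, h2⟩
      exact ⟨h1.symm, by rw [hsym]; exact h2⟩
  -- find a good vertex subset
  have hnum := numeric nb k Δ' (r := r) hsymnb hΔ'pos (by omega) hr2 hn' hcol
  obtain ⟨U, hUcard, hUbd⟩ := exists_good_U nb k Δ' hsymnb hΔ'pos hnum
  have hΔX : Δ' ≤ U.card := by omega
  -- embed the first part
  obtain ⟨ψ0, hinj0, hU0, hsafe0⟩ := phaseA nb k Δ' nbF A U hsymF hdegF hΔ'pos (by omega)
    hUcard hΔX hUbd.le A (subset_refl A)
  have hsafe0' : ∀ b, b ∉ A → Safe nb k Δ' U ((nbF b).image ψ0) := by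
    intro b hb
    have hint : nbF b ∩ A = nbF b := by
      apply Finset.inter_eq_left.2
      intro y hy
      by_contra hyA
      exact hb ((hcross b y hy).2 hyA)
    have h := hsafe0 b hb
    rwa [hint] at h
  -- embed the second part
  obtain ⟨ψ, hinj, hagree, hadj⟩ := phaseB nb k Δ' nbF A U hsymF hdegF hcross hΔ'pos
    (by omega) hUcard hΔX ψ0 hinj0 hU0 hsafe0'
    (univ.filter (fun x => x ∉ A)) (fun y hy => (Finset.mem_filter.1 hy).2)
  have hunion : A ∪ univ.filter (fun x => x ∉ A) = univ := by
    ext z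
    simp only [Finset.mem_union, Finset.mem_filter, Finset.mem_univ, true_and, iff_true]
    tauto
  rw [hunion] at hinj
  have hinjective : Function.Injective ψ := fun p q hpq =>
    hinj (by simp) (by simp) hpq
  refine ⟨col, ⟨ψ, hinjective⟩, ?_⟩
  intro a b hab
  simp only [Function.Embedding.coeFn_mk]
  by_cases haA : a ∈ A
  · have hbnb : b ∈ nbF a := by
      simp only [hnbF, SimpleGraph.mem_neighborFinset]
      exact hab
    have hbB : b ∉ A := (hcross a b hbnb).1 haA
    have hbmem : b ∈ univ.filter (fun x => x ∉ A) :=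
      Finset.mem_filter.2 ⟨Finset.mem_univ _, hbB⟩
    have hanb : a ∈ nbF b := (hsymF a b).2 hbnb
    have h := hadj b hbmem a hanb
    simp only [hnb, hnbc, Finset.mem_filter, Finset.mem_univ, true_and] at h
    exact h.2
  · have hamem : a ∈ univ.filter (fun x => x ∉ A) :=
      Finset.mem_filter.2 ⟨Finset.mem_univ _, haA⟩
    have hbnb : b ∈ nbF a := by
      simp only [hnbF, SimpleGraph.mem_neighborFinset]
      exact hab
    have h := hadj a hamem b hbnb
    simp only [hnb, hnbc, Finset.mem_filter, Finset.mem_univ, true_and] at h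
    rw [hsym]
    exact h.2
end

section
/- Let $\Delta$ be a positive integer, let $0<\lambda<1/(2\Delta)$, and let $\mathcal{H}$ be an $m$-vertex multihypergraph with maximum degree at most $\Delta$ in which every hyperedge has size at most $\Delta$. Let $\mathcal{G}$ be a down-closed hypergraph with $n\geq 2m$ vertices and more than $(1-\lambda^\Delta)\binom{n}{\Delta}$ hyperedges of size $\Delta$. Then the number of injective maps $f:V(\mathcal{H})\to V(\mathcal{G})$ such that $f(e)\in E(\mathcal{G})$ for every hyperedge $e$ of $\mathcal{H}$ is at least $(1-2\Delta\lambda)^m\, n(n-1)\cdots(n-m+1)$. -/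
open scoped Classical

open Finset in
noncomputable def BadAt {W : Type*} [Fintype W] [DecidableEq W]
    (E : Finset (Finset W)) (lam : ℝ) (n : ℕ) : ℕ → Finset W → Prop
  | 0, S => S ∉ E
  | (r+1), S => S ∉ E ∨ lam * n < ((Finset.univ.filter
      (fun w => w ∉ S ∧ BadAt E lam n r (insert w S))).card : ℝ)

namespace StmtSix
variable {W : Type*} [Fintype W] [DecidableEq W] (E : Finset (Finset W)) (lam : ℝ) (n Δ : ℕ)

/-- bad extensions of `S` at level `r`. -/
noncomputable def bext (r : ℕ) (S : Finset W) : Finset W :=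
  Finset.univ.filter (fun w => w ∉ S ∧ BadAt E lam n r (insert w S))

lemma badAt_succ_iff (r : ℕ) (S : Finset W) :
    BadAt E lam n (r+1) S ↔ (S ∉ E ∨ lam * n < ((bext E lam n r S).card : ℝ)) := Iff.rfl

lemma badAt_of_notMem {S : Finset W} (h : S ∉ E) : ∀ r, BadAt E lam n r S
  | 0 => h
  | (r+1) => Or.inl h

lemma mem_of_not_badAt {S : Finset W} {r : ℕ} (h : ¬ BadAt E lam n r S) : S ∈ E := by
  by_contra hS; exact h (badAt_of_notMem E lam n hS r)

lemma not_badAt_succ {S : Finset W} {r : ℕ} (h : ¬ BadAt E lam n (r+1) S) :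
    S ∈ E ∧ ((bext E lam n r S).card : ℝ) ≤ lam * n := by
  rw [badAt_succ_iff] at h
  push_neg at h
  exact h

/-- number of bad sets of size `Δ - r` at level `r`. -/
noncomputable def NB (r : ℕ) : ℕ :=
  (Finset.univ.filter (fun S : Finset W => S.card = Δ - r ∧ BadAt E lam n r S)).card

lemma step (hdc : ∀ e ∈ E, ∀ e' ⊆ e, e' ∈ E) (hn : Fintype.card W = n) (hΔn : Δ ≤ n)
    (hlamn : lam * n ≤ (n : ℝ) - Δ + 1) (hΔ : 0 < Δ) (r : ℕ) (hr : r < Δ) :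
    lam * n * (NB E lam n Δ (r+1) : ℝ) ≤ ((Δ - r : ℕ) : ℝ) * (NB E lam n Δ r : ℝ) := by
  classical
  set A := Finset.univ.filter
    (fun S : Finset W => S.card = Δ - (r+1) ∧ BadAt E lam n (r+1) S) with hA
  set B := Finset.univ.filter
    (fun S : Finset W => S.card = Δ - r ∧ BadAt E lam n r S) with hB
  have claim1 : ∀ S ∈ A, lam * n ≤ ((bext E lam n r S).card : ℝ) := by
    intro S hS
    obtain ⟨hcard, hbad⟩ := (Finset.mem_filter.mp hS).2
    rcases hbad with hnE | hlt
    · have hsub : Sᶜ ⊆ bext E lam n r S := by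
        intro w hw
        rw [Finset.mem_compl] at hw
        refine Finset.mem_filter.mpr ⟨Finset.mem_univ _, hw, ?_⟩
        refine badAt_of_notMem E lam n (fun hins => hnE ?_) r
        exact hdc _ hins S (Finset.subset_insert _ _)
      have h2 : ((Sᶜ).card : ℝ) ≤ ((bext E lam n r S).card : ℝ) := by
        exact_mod_cast Finset.card_le_card hsub
      have h1 : (Sᶜ).card = n - (Δ - (r+1)) := by
        rw [Finset.card_compl, hcard, hn]
      have h3 : (n : ℝ) - (Δ : ℝ) + 1 ≤ ((Sᶜ).card : ℝ) := by
        rw [h1]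
        have hle : Δ - (r+1) ≤ n := le_trans (Nat.sub_le _ _) hΔn
        rw [Nat.cast_sub hle]
        have : ((Δ - (r+1) : ℕ) : ℝ) ≤ (Δ : ℝ) - 1 := by
          have : Δ - (r+1) ≤ Δ - 1 := by omega
          calc ((Δ - (r+1) : ℕ) : ℝ) ≤ ((Δ - 1 : ℕ) : ℝ) := by exact_mod_cast this
            _ = (Δ : ℝ) - 1 := by
              rw [Nat.cast_sub hΔ]; norm_num
        linarith
      linarith
    · exact hlt.le
  -- double counting
  have hmaps : ∀ p ∈ A.sigma (fun S => bext E lam n r S), insert p.2 p.1 ∈ B := by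
    rintro ⟨S, w⟩ hp
    rw [Finset.mem_sigma] at hp
    obtain ⟨hSA, hw⟩ := hp
    obtain ⟨hcard, _⟩ := (Finset.mem_filter.mp hSA).2
    obtain ⟨-, hwS, hbad⟩ := Finset.mem_filter.mp hw
    refine Finset.mem_filter.mpr ⟨Finset.mem_univ _, ?_, hbad⟩
    rw [Finset.card_insert_of_notMem hwS, hcard]
    omega
  have hfib := Finset.card_eq_sum_card_fiberwise hmaps
  have hfibbound : ∀ T ∈ B,
      ((A.sigma (fun S => bext E lam n r S)).filter (fun p => insert p.2 p.1 = T)).card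
        ≤ Δ - r := by
    intro T hT
    obtain ⟨hTcard, _⟩ := (Finset.mem_filter.mp hT).2
    rw [← hTcard]
    apply Finset.card_le_card_of_injOn (fun p => p.2)
    · rintro ⟨S, w⟩ hp
      obtain ⟨hps, hpe⟩ := Finset.mem_filter.mp hp
      simp only at hpe
      rw [← hpe]
      exact Finset.mem_insert_self _ _
    · rintro ⟨S, w⟩ hp ⟨S', w'⟩ hp' hww
      obtain ⟨hps, hpe⟩ := Finset.mem_filter.mp hp
      obtain ⟨hps', hpe'⟩ := Finset.mem_filter.mp hp'
      simp only at hpe hpe' hww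
      subst hww
      rw [Finset.mem_sigma] at hps hps'
      have hwS : w ∉ S := (Finset.mem_filter.mp hps.2).2.1
      have hwS' : w ∉ S' := (Finset.mem_filter.mp hps'.2).2.1
      have : S = S' := by
        have e1 : (insert w S).erase w = S := Finset.erase_insert hwS
        have e2 : (insert w S').erase w = S' := Finset.erase_insert hwS'
        rw [← e1, ← e2, hpe, hpe']
      subst this
      rfl
  have hsum : ∑ S ∈ A, ((bext E lam n r S).card : ℕ) ≤ (Δ - r) * B.card := by
    rw [← Finset.card_sigma, hfib]
    calc ∑ T ∈ B, ((A.sigma (fun S => bext E lam n r S)).filter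
          (fun p => insert p.2 p.1 = T)).card
        ≤ ∑ _T ∈ B, (Δ - r) := Finset.sum_le_sum hfibbound
      _ = (Δ - r) * B.card := by rw [Finset.sum_const, smul_eq_mul, mul_comm]
  have hlow : lam * n * (A.card : ℝ) ≤ ∑ S ∈ A, ((bext E lam n r S).card : ℝ) := by
    calc lam * n * (A.card : ℝ) = ∑ _S ∈ A, lam * n := by
          rw [Finset.sum_const, nsmul_eq_mul]; ring
      _ ≤ _ := Finset.sum_le_sum claim1
  have : (∑ S ∈ A, ((bext E lam n r S).card : ℝ)) ≤ ((Δ - r : ℕ) : ℝ) * (B.card : ℝ) := by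
    push_cast [← Nat.cast_sum] at hsum ⊢
    exact_mod_cast hsum
  calc lam * n * (NB E lam n Δ (r+1) : ℝ) = lam * n * (A.card : ℝ) := rfl
    _ ≤ _ := le_trans hlow this

lemma chain (hdc : ∀ e ∈ E, ∀ e' ⊆ e, e' ∈ E) (hn : Fintype.card W = n) (hΔn : Δ ≤ n)
    (hlamn : lam * n ≤ (n : ℝ) - Δ + 1) (hΔ : 0 < Δ) (hlam0 : 0 ≤ lam) :
    ∀ r ≤ Δ, (lam * n) ^ r * (NB E lam n Δ r : ℝ)
      ≤ (Δ.descFactorial r : ℝ) * (NB E lam n Δ 0 : ℝ) := by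
  intro r
  induction r with
  | zero => intro _; simp
  | succ r ih =>
    intro hr
    have ihr := ih (by omega)
    have hst := step E lam n Δ hdc hn hΔn hlamn hΔ r (by omega)
    have hnn : 0 ≤ lam * n := mul_nonneg hlam0 (Nat.cast_nonneg n)
    have h1 : (lam * n) ^ (r+1) * (NB E lam n Δ (r+1) : ℝ)
        = (lam * n) ^ r * (lam * n * (NB E lam n Δ (r+1) : ℝ)) := by ring
    rw [h1, Nat.descFactorial_succ]
    push_cast
    calc (lam * n) ^ r * (lam * n * (NB E lam n Δ (r+1) : ℝ))
        ≤ (lam * n) ^ r * (((Δ - r : ℕ) : ℝ) * (NB E lam n Δ r : ℝ)) := by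
          apply mul_le_mul_of_nonneg_left hst (pow_nonneg hnn r)
      _ = ((Δ - r : ℕ) : ℝ) * ((lam * n) ^ r * (NB E lam n Δ r : ℝ)) := by ring
      _ ≤ ((Δ - r : ℕ) : ℝ) * ((Δ.descFactorial r : ℝ) * (NB E lam n Δ 0 : ℝ)) := by
          apply mul_le_mul_of_nonneg_left ihr (Nat.cast_nonneg _)
      _ = ((Δ - r : ℕ) : ℝ) * (Δ.descFactorial r : ℝ) * (NB E lam n Δ 0 : ℝ) := by ring

lemma root_not_bad (hdc : ∀ e ∈ E, ∀ e' ⊆ e, e' ∈ E) (hn : Fintype.card W = n) (hΔn : Δ ≤ n)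
    (hlamn : lam * n ≤ (n : ℝ) - Δ + 1) (hΔ : 0 < Δ) (hlam0 : 0 < lam)
    (hempty : ∅ ∈ E)
    (hN0 : (NB E lam n Δ 0 : ℝ) < lam ^ Δ * (n.choose Δ : ℝ)) :
    ¬ BadAt E lam n Δ ∅ := by
  have hn0 : 0 < n := lt_of_lt_of_le hΔ hΔn
  have hΔeq : Δ = (Δ - 1) + 1 := by omega
  intro hbad
  rw [hΔeq, badAt_succ_iff] at hbad
  rcases hbad with h | h
  · exact h hempty
  -- bound the number of bad singletons
  have hsing : ((bext E lam n (Δ-1) ∅).card : ℝ) ≤ (NB E lam n Δ (Δ-1) : ℝ) := by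
    have : (bext E lam n (Δ-1) ∅).card
        ≤ (Finset.univ.filter (fun S : Finset W =>
            S.card = Δ - (Δ-1) ∧ BadAt E lam n (Δ-1) S)).card := by
      apply Finset.card_le_card_of_injOn (fun w => {w})
      · intro w hw
        obtain ⟨-, -, hb⟩ := Finset.mem_filter.mp hw
        refine Finset.mem_filter.mpr ⟨Finset.mem_univ _, ?_, ?_⟩
        · rw [Finset.card_singleton]; omega
        · simpa using hb
      · intro a _ b _ hab
        exact Finset.singleton_injective hab
    exact_mod_cast this
  have hch := chain E lam n Δ hdc hn hΔn hlamn hΔ hlam0.le (Δ-1) (by omega)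
  have hdf : (Δ.descFactorial (Δ-1) : ℝ) * (NB E lam n Δ 0 : ℝ)
      < (Δ.descFactorial (Δ-1) : ℝ) * (lam ^ Δ * (n.choose Δ : ℝ)) := by
    apply mul_lt_mul_of_pos_left hN0
    have : Δ.descFactorial (Δ-1) ≠ 0 := by
      rw [Ne, Nat.descFactorial_eq_zero_iff_lt]; omega
    exact_mod_cast Nat.pos_of_ne_zero this
  have hdfe : Δ.descFactorial (Δ-1) * n.choose Δ = n.descFactorial Δ := by
    have h1 : Δ.descFactorial Δ = Δ.factorial := Nat.descFactorial_self Δ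
    have h2 := Nat.descFactorial_succ Δ (Δ-1)
    rw [show Δ - 1 + 1 = Δ by omega, show Δ - (Δ-1) = 1 by omega, one_mul] at h2
    rw [← h2, h1, ← Nat.descFactorial_eq_factorial_mul_choose]
  have hdpow : (n.descFactorial Δ : ℝ) ≤ (n : ℝ) ^ Δ := by
    exact_mod_cast Nat.descFactorial_le_pow n Δ
  have hkey : (lam * n) ^ (Δ-1) * ((bext E lam n (Δ-1) ∅).card : ℝ)
      < (lam * n) ^ (Δ-1) * (lam * n) := by
    have hnn : 0 ≤ (lam * n) ^ (Δ-1) :=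
      pow_nonneg (mul_nonneg hlam0.le (Nat.cast_nonneg n)) _
    calc (lam * n) ^ (Δ-1) * ((bext E lam n (Δ-1) ∅).card : ℝ)
        ≤ (lam * n) ^ (Δ-1) * (NB E lam n Δ (Δ-1) : ℝ) :=
          mul_le_mul_of_nonneg_left hsing hnn
      _ ≤ (Δ.descFactorial (Δ-1) : ℝ) * (NB E lam n Δ 0 : ℝ) := hch
      _ < (Δ.descFactorial (Δ-1) : ℝ) * (lam ^ Δ * (n.choose Δ : ℝ)) := hdf
      _ = lam ^ Δ * ((Δ.descFactorial (Δ-1) * n.choose Δ : ℕ) : ℝ) := by push_cast; ring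
      _ = lam ^ Δ * (n.descFactorial Δ : ℝ) := by rw [hdfe]
      _ ≤ lam ^ Δ * (n : ℝ) ^ Δ := by
          apply mul_le_mul_of_nonneg_left hdpow (pow_nonneg hlam0.le _)
      _ = (lam * n) ^ Δ := by rw [mul_pow]
      _ = (lam * n) ^ (Δ-1) * (lam * n) := by
          conv_lhs => rw [hΔeq]
          rw [pow_succ]
  have hpos : 0 < (lam * n) ^ (Δ-1) := by
    apply pow_pos
    apply mul_pos hlam0
    exact_mod_cast hn0
  have := lt_of_mul_lt_mul_left hkey hpos.le
  linarith
end StmtSix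
section Greedy
variable {V : Type*} [DecidableEq V] {m q : ℕ}
variable {W : Type*} [Fintype W] [DecidableEq W]

/-- image of the first `i` vertices of edge `j` under `g`. -/
noncomputable def part (H : Fin q → Finset V) (k : V ≃ Fin m) (i : ℕ)
    (g : Fin m → W) (j : Fin q) : Finset W :=
  ((H j).filter (fun v => ((k v : Fin m) : ℕ) < i)).image (fun v => g (k v))

lemma part_congr {H : Fin q → Finset V} {k : V ≃ Fin m} {i : ℕ} {g g' : Fin m → W}
    (h : ∀ a : Fin m, (a : ℕ) < i → g a = g' a) (j : Fin q) :
    part H k i g j = part H k i g' j := by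
  unfold part
  apply Finset.image_congr
  intro v hv
  exact h (k v) (Finset.mem_filter.mp hv).2

lemma part_succ {H : Fin q → Finset V} {k : V ≃ Fin m} {i : ℕ} (him : i < m)
    (g : Fin m → W) (j : Fin q) :
    part H k (i+1) g j =
      if k.symm ⟨i, him⟩ ∈ H j then insert (g ⟨i, him⟩) (part H k i g j)
      else part H k i g j := by
  ext w
  simp only [part, Finset.mem_image, Finset.mem_filter]
  by_cases hv : k.symm ⟨i, him⟩ ∈ H j
  · rw [if_pos hv]
    simp only [Finset.mem_insert, Finset.mem_image, Finset.mem_filter]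
    constructor
    · rintro ⟨v, ⟨hvH, hlt⟩, rfl⟩
      rcases Nat.lt_succ_iff_lt_or_eq.mp hlt with h | h
      · exact Or.inr ⟨v, ⟨hvH, h⟩, rfl⟩
      · left
        have : k v = ⟨i, him⟩ := Fin.ext h
        rw [this]
    · rintro (rfl | ⟨v, ⟨hvH, hlt⟩, rfl⟩)
      · refine ⟨k.symm ⟨i, him⟩, ⟨hv, ?_⟩, ?_⟩ <;> rw [Equiv.apply_symm_apply]
        · exact Nat.lt_succ_self i
      · exact ⟨v, ⟨hvH, Nat.lt_succ_of_lt hlt⟩, rfl⟩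
  · rw [if_neg hv]
    simp only [Finset.mem_image, Finset.mem_filter]
    constructor
    · rintro ⟨v, ⟨hvH, hlt⟩, rfl⟩
      rcases Nat.lt_succ_iff_lt_or_eq.mp hlt with h | h
      · exact ⟨v, ⟨hvH, h⟩, rfl⟩
      · exfalso
        have : k v = ⟨i, him⟩ := Fin.ext h
        have : v = k.symm ⟨i, him⟩ := by rw [← this, Equiv.symm_apply_apply]
        exact hv (this ▸ hvH)
    · rintro ⟨v, ⟨hvH, hlt⟩, rfl⟩
      exact ⟨v, ⟨hvH, Nat.lt_succ_of_lt hlt⟩, rfl⟩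

lemma part_card_le (H : Fin q → Finset V) (k : V ≃ Fin m) (i : ℕ)
    (g : Fin m → W) (j : Fin q) : (part H k i g j).card ≤ (H j).card :=
  le_trans Finset.card_image_le (Finset.card_le_card (Finset.filter_subset _ _))

lemma part_subset_image (H : Fin q → Finset V) (k : V ≃ Fin m) (i : ℕ)
    (g : Fin m → W) (j : Fin q) :
    part H k i g j ⊆ (Finset.univ.filter (fun a : Fin m => (a : ℕ) < i)).image g := by
  intro w hw
  obtain ⟨v, hv, rfl⟩ := Finset.mem_image.mp hw
  obtain ⟨-, hlt⟩ := Finset.mem_filter.mp hv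
  exact Finset.mem_image.mpr ⟨k v, Finset.mem_filter.mpr ⟨Finset.mem_univ _, hlt⟩, rfl⟩

lemma part_card_lt {H : Fin q → Finset V} {k : V ≃ Fin m} {i : ℕ} (him : i < m)
    {j : Fin q} (hv : k.symm ⟨i, him⟩ ∈ H j) (g : Fin m → W) :
    (part H k i g j).card + 1 ≤ (H j).card := by
  have hsub : (H j).filter (fun v => ((k v : Fin m) : ℕ) < i)
      ⊆ (H j).erase (k.symm ⟨i, him⟩) := by
    intro v hvf
    obtain ⟨hvH, hlt⟩ := Finset.mem_filter.mp hvf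
    refine Finset.mem_erase.mpr ⟨?_, hvH⟩
    intro heq
    rw [heq, Equiv.apply_symm_apply] at hlt
    exact Nat.lt_irrefl i hlt
  have h1 : (part H k i g j).card ≤ ((H j).erase (k.symm ⟨i, him⟩)).card :=
    le_trans Finset.card_image_le (Finset.card_le_card hsub)
  rw [Finset.card_erase_of_mem hv] at h1
  have h2 : 1 ≤ (H j).card := Finset.card_pos.mpr ⟨_, hv⟩
  omega
end Greedy
section Greedy2
variable {V : Type*} [DecidableEq V] {m q : ℕ}
variable {W : Type*} [Fintype W] [DecidableEq W]

open StmtSix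

/-- good partial embeddings on the first `i` vertices (other coordinates pinned to `w₀`). -/
noncomputable def TGood (E : Finset (Finset W)) (lam : ℝ) (n Δ : ℕ)
    (H : Fin q → Finset V) (k : V ≃ Fin m) (w₀ : W) (i : ℕ) : Finset (Fin m → W) :=
  Finset.univ.filter (fun g =>
    (∀ a : Fin m, i ≤ (a : ℕ) → g a = w₀) ∧
    (Set.InjOn g {a : Fin m | (a : ℕ) < i}) ∧
    ∀ i' ≤ i, ∀ j, ¬ BadAt E lam n (Δ - (part H k i' g j).card) (part H k i' g j))

set_option maxHeartbeats 1000000 in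
lemma TGood_step (E : Finset (Finset W)) (lam : ℝ) (n Δ : ℕ)
    (H : Fin q → Finset V) (k : V ≃ Fin m) (w₀ : W)
    (hn : Fintype.card W = n)
    (hHdeg : ∀ v : V, (Finset.univ.filter (fun j => v ∈ H j)).card ≤ Δ)
    (hHsize : ∀ j, (H j).card ≤ Δ)
    (hlam0 : 0 ≤ lam) (hlam1 : 2 * (Δ : ℝ) * lam ≤ 1)
    (i : ℕ) (him : i < m) (h2i : 2 * (i : ℝ) ≤ (n : ℝ)) :
    ((TGood E lam n Δ H k w₀ i).card : ℝ) * ((1 - 2 * Δ * lam) * ((n : ℝ) - i))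
      ≤ ((TGood E lam n Δ H k w₀ (i+1)).card : ℝ) := by
  classical
  set vi : Fin m := ⟨i, him⟩ with hvi
  set vv : V := k.symm vi with hvv
  set ρ : (Fin m → W) → (Fin m → W) := fun g => Function.update g vi w₀ with hρ
  -- ρ maps T(i+1) into T(i)
  have hmaps : ∀ g ∈ TGood E lam n Δ H k w₀ (i+1), ρ g ∈ TGood E lam n Δ H k w₀ i := by
    intro g hg
    obtain ⟨-, hg1, hg2, hg3⟩ := Finset.mem_filter.mp hg
    have hagree : ∀ a : Fin m, (a : ℕ) < i → ρ g a = g a := by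
      intro a ha
      apply Function.update_of_ne
      intro heq
      rw [heq] at ha
      exact Nat.lt_irrefl i ha
    refine Finset.mem_filter.mpr ⟨Finset.mem_univ _, ?_, ?_, ?_⟩
    · intro a ha
      simp only [hρ]
      by_cases hai : a = vi
      · rw [hai]; exact Function.update_self _ _ _
      · rw [Function.update_of_ne hai]
        apply hg1
        have : (a : ℕ) ≠ i := fun h => hai (Fin.ext h)
        omega
    · intro a ha b hb hab
      rw [hagree a ha, hagree b hb] at hab
      exact hg2 (Nat.lt_succ_of_lt ha) (Nat.lt_succ_of_lt hb) hab
    · intro i' hi' j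
      have : part H k i' (ρ g) j = part H k i' g j :=
        part_congr (fun a ha => hagree a (lt_of_lt_of_le ha hi')) j
      rw [this]
      exact hg3 i' (le_trans hi' (Nat.le_succ i)) j
  have hfib := Finset.card_eq_sum_card_fiberwise hmaps
  -- per-fiber lower bound
  have hperf : ∀ f ∈ TGood E lam n Δ H k w₀ i,
      (1 - 2 * Δ * lam) * ((n : ℝ) - i) ≤
        (((TGood E lam n Δ H k w₀ (i+1)).filter (fun g => ρ g = f)).card : ℝ) := by
    intro f hf
    obtain ⟨-, hf1, hf2, hf3⟩ := Finset.mem_filter.mp hf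
    set used : Finset W := (Finset.univ.filter (fun a : Fin m => (a : ℕ) < i)).image f
      with hused
    set J : Finset (Fin q) := Finset.univ.filter (fun j => vv ∈ H j) with hJ
    set bW : Finset W := used ∪ J.biUnion
      (fun j => bext E lam n (Δ - (part H k i f j).card - 1) (part H k i f j)) with hbW
    set good : Finset W := Finset.univ \ bW with hgood
    -- each good w extends f
    have hext : ∀ w ∈ good, Function.update f vi w ∈ TGood E lam n Δ H k w₀ (i+1) ∧
        ρ (Function.update f vi w) = f := by
      intro w hw
      have hwbW : w ∉ bW := (Finset.mem_sdiff.mp hw).2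
      have hwused : w ∉ used := fun h => hwbW (Finset.mem_union_left _ h)
      have hagree : ∀ a : Fin m, (a : ℕ) < i → Function.update f vi w a = f a := by
        intro a ha
        apply Function.update_of_ne
        intro heq
        rw [heq] at ha
        exact Nat.lt_irrefl i ha
      constructor
      · refine Finset.mem_filter.mpr ⟨Finset.mem_univ _, ?_, ?_, ?_⟩
        · intro a ha
          have hai : a ≠ vi := by
            intro heq
            rw [heq] at ha
            simp only [hvi] at ha
            omega
          rw [Function.update_of_ne hai]
          exact hf1 a (by
            have : (a : ℕ) ≠ i := fun h => hai (Fin.ext h)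
            omega)
        · intro a ha b hb hab
          simp only [Set.mem_setOf_eq] at ha hb
          by_cases hai : a = vi <;> by_cases hbi : b = vi
          · rw [hai, hbi]
          · exfalso
            have hbl : (b : ℕ) < i := by
              have : (b : ℕ) ≠ i := fun h => hbi (Fin.ext h)
              omega
            rw [hai, Function.update_self, Function.update_of_ne hbi] at hab
            exact hwused (Finset.mem_image.mpr
              ⟨b, Finset.mem_filter.mpr ⟨Finset.mem_univ _, hbl⟩, hab.symm⟩)
          · exfalso
            have hal : (a : ℕ) < i := by
              have : (a : ℕ) ≠ i := fun h => hai (Fin.ext h)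
              omega
            rw [hbi, Function.update_self, Function.update_of_ne hai] at hab
            exact hwused (Finset.mem_image.mpr
              ⟨a, Finset.mem_filter.mpr ⟨Finset.mem_univ _, hal⟩, hab⟩)
          · have hal : (a : ℕ) < i := by
              have : (a : ℕ) ≠ i := fun h => hai (Fin.ext h)
              omega
            have hbl : (b : ℕ) < i := by
              have : (b : ℕ) ≠ i := fun h => hbi (Fin.ext h)
              omega
            rw [Function.update_of_ne hai, Function.update_of_ne hbi] at hab
            exact hf2 hal hbl hab
        · intro i' hi' j
          rcases Nat.lt_succ_iff_lt_or_eq.mp (Nat.lt_succ_of_le hi') with hlt | heq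
          · have : part H k i' (Function.update f vi w) j = part H k i' f j :=
              part_congr (fun a ha => hagree a (by omega)) j
            rw [this]
            exact hf3 i' (by omega) j
          · subst heq
            rw [part_succ him]
            have hpp : part H k i (Function.update f vi w) j = part H k i f j :=
              part_congr (fun a ha => hagree a ha) j
            by_cases hvj : k.symm ⟨i, him⟩ ∈ H j
            · rw [if_pos hvj, hpp, Function.update_self]
              set P := part H k i f j with hP
              have hwP : w ∉ P := by
                intro hmem
                exact hwused (part_subset_image H k i f j hmem)
              have hcard : (insert w P).card = P.card + 1 :=
                Finset.card_insert_of_notMem hwP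
              rw [hcard]
              have hjJ : j ∈ J := Finset.mem_filter.mpr ⟨Finset.mem_univ _, hvj⟩
              have hwb : w ∉ bext E lam n (Δ - P.card - 1) P := by
                intro hmem
                exact hwbW (Finset.mem_union_right _
                  (Finset.mem_biUnion.mpr ⟨j, hjJ, hmem⟩))
              intro hbad
              apply hwb
              refine Finset.mem_filter.mpr ⟨Finset.mem_univ _, hwP, ?_⟩
              have : Δ - (P.card + 1) = Δ - P.card - 1 := by omega
              rw [← this]
              exact hbad
            · rw [if_neg hvj, hpp]
              exact hf3 i le_rfl j
      · rw [hρ]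
        simp only
        rw [Function.update_idem]
        have : f vi = w₀ := hf1 vi le_rfl
        rw [← this, Function.update_eq_self]
    -- fiber contains all good extensions
    have hfibge : good.card ≤
        ((TGood E lam n Δ H k w₀ (i+1)).filter (fun g => ρ g = f)).card := by
      apply Finset.card_le_card_of_injOn (fun w => Function.update f vi w)
      · intro w hw
        obtain ⟨h1, h2⟩ := hext w hw
        exact Finset.mem_filter.mpr ⟨h1, h2⟩
      · intro a _ b _ hab
        have h := congrFun hab vi
        simp only [Function.update_self] at h
        exact h
    -- lower bound for good.card
    have hfilter_card : (Finset.univ.filter (fun a : Fin m => (a : ℕ) < i)).card ≤ i := by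
      calc (Finset.univ.filter (fun a : Fin m => (a : ℕ) < i)).card
          ≤ (Finset.range i).card := Finset.card_le_card_of_injOn (fun a => (a : ℕ))
            (fun a ha => Finset.mem_range.mpr (Finset.mem_filter.mp ha).2)
            (fun a _ b _ hab => Fin.ext hab)
        _ = i := Finset.card_range i
    have hcard_used : used.card ≤ i := le_trans Finset.card_image_le hfilter_card
    have hbextsmall : ∀ j ∈ J,
        ((bext E lam n (Δ - (part H k i f j).card - 1) (part H k i f j)).card : ℝ)
          ≤ lam * n := by
      intro j hj
      have hvj : vv ∈ H j := (Finset.mem_filter.mp hj).2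
      have hlt := part_card_lt him hvj f
      have hΔc : Δ - (part H k i f j).card = (Δ - (part H k i f j).card - 1) + 1 := by
        have := hHsize j; omega
      have hnb := hf3 i le_rfl j
      rw [hΔc] at hnb
      exact (not_badAt_succ E lam n hnb).2
    have hJcard : J.card ≤ Δ := hHdeg vv
    have hbWcard : (bW.card : ℝ) ≤ (i : ℝ) + (Δ : ℝ) * (lam * n) := by
      have h1 : bW.card ≤ used.card
          + (J.biUnion (fun j =>
              bext E lam n (Δ - (part H k i f j).card - 1) (part H k i f j))).card :=
        Finset.card_union_le _ _
      have h2 : (J.biUnion (fun j =>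
              bext E lam n (Δ - (part H k i f j).card - 1) (part H k i f j))).card
          ≤ ∑ j ∈ J, (bext E lam n (Δ - (part H k i f j).card - 1)
              (part H k i f j)).card :=
        Finset.card_biUnion_le
      have h3 : (∑ j ∈ J, ((bext E lam n (Δ - (part H k i f j).card - 1)
              (part H k i f j)).card : ℝ)) ≤ (J.card : ℝ) * (lam * n) := by
        calc (∑ j ∈ J, ((bext E lam n (Δ - (part H k i f j).card - 1)
                (part H k i f j)).card : ℝ)) ≤ ∑ _j ∈ J, lam * n :=
              Finset.sum_le_sum hbextsmall
          _ = (J.card : ℝ) * (lam * n) := by rw [Finset.sum_const, nsmul_eq_mul]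
      have h4 : (J.card : ℝ) ≤ (Δ : ℝ) := by exact_mod_cast hJcard
      have h5 : 0 ≤ lam * n := mul_nonneg hlam0 (Nat.cast_nonneg n)
      have h6 : ((used.card : ℕ) : ℝ) ≤ (i : ℝ) := by exact_mod_cast hcard_used
      have h12 : (bW.card : ℝ) ≤ (used.card : ℝ)
          + ∑ j ∈ J, ((bext E lam n (Δ - (part H k i f j).card - 1)
              (part H k i f j)).card : ℝ) := by
        push_cast
        exact_mod_cast le_trans h1 (Nat.add_le_add_left h2 _)
      calc (bW.card : ℝ) ≤ (used.card : ℝ) + (J.card : ℝ) * (lam * n) := by linarith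
        _ ≤ (i : ℝ) + (Δ : ℝ) * (lam * n) := by
            have := mul_le_mul_of_nonneg_right h4 h5
            linarith
    have hgoodcard : (n : ℝ) - (i : ℝ) - (Δ : ℝ) * (lam * n) ≤ (good.card : ℝ) := by
      have hbWn : bW.card ≤ n := by
        rw [← hn, ← Finset.card_univ]
        exact Finset.card_le_univ bW
      have : good.card = n - bW.card := by
        rw [hgood, Finset.card_sdiff_of_subset (Finset.subset_univ bW), Finset.card_univ, hn]
      rw [this, Nat.cast_sub hbWn]
      linarith
    have hkey : (0 : ℝ) ≤ (Δ : ℝ) * lam * ((n : ℝ) - 2 * i) := by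
      apply mul_nonneg (mul_nonneg (Nat.cast_nonneg Δ) hlam0)
      linarith
    have hfinal : (1 - 2 * Δ * lam) * ((n : ℝ) - i) ≤ (good.card : ℝ) := by
      nlinarith [hgoodcard, hkey]
    calc (1 - 2 * Δ * lam) * ((n : ℝ) - i) ≤ (good.card : ℝ) := hfinal
      _ ≤ _ := by exact_mod_cast hfibge
  -- sum over fibers
  calc ((TGood E lam n Δ H k w₀ i).card : ℝ) * ((1 - 2 * Δ * lam) * ((n : ℝ) - i))
      = ∑ _f ∈ TGood E lam n Δ H k w₀ i, (1 - 2 * Δ * lam) * ((n : ℝ) - i) := by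
        rw [Finset.sum_const, nsmul_eq_mul]
    _ ≤ ∑ f ∈ TGood E lam n Δ H k w₀ i,
        (((TGood E lam n Δ H k w₀ (i+1)).filter (fun g => ρ g = f)).card : ℝ) :=
        Finset.sum_le_sum hperf
    _ = ((TGood E lam n Δ H k w₀ (i+1)).card : ℝ) := by
        rw [hfib]; push_cast; rfl

lemma TGood_zero_mem (E : Finset (Finset W)) (lam : ℝ) (n Δ : ℕ)
    (H : Fin q → Finset V) (k : V ≃ Fin m) (w₀ : W)
    (hroot : ¬ BadAt E lam n Δ ∅) :
    (fun _ : Fin m => w₀) ∈ TGood E lam n Δ H k w₀ 0 := by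
  refine Finset.mem_filter.mpr ⟨Finset.mem_univ _, fun a _ => rfl, ?_, ?_⟩
  · intro a ha
    exact absurd ha (Nat.not_lt_zero _)
  · intro i' hi' j
    have hi0 : i' = 0 := Nat.le_zero.mp hi'
    subst hi0
    have hP : part H k 0 (fun _ : Fin m => w₀) j = ∅ := by
      unfold part
      rw [Finset.filter_false_of_mem (fun v _ => Nat.not_lt_zero _), Finset.image_empty]
    rw [hP, Finset.card_empty, Nat.sub_zero]
    exact hroot
end Greedy2

open StmtSix in
/-- Counting embeddings of a bounded-degree multihypergraph into a dense
down-closed hypergraph. -/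
theorem stmt_6 {V W : Type*} [Fintype V] [Fintype W] [DecidableEq V] [DecidableEq W]
    (Δ m n q : ℕ) (hΔ : 0 < Δ) (lam : ℝ) (hlam0 : 0 < lam) (hlam : lam < 1 / (2 * Δ))
    (H : Fin q → Finset V) (hm : Fintype.card V = m)
    (hHdeg : ∀ v : V, (Finset.univ.filter (fun j => v ∈ H j)).card ≤ Δ)
    (hHsize : ∀ j, (H j).card ≤ Δ)
    (E : Finset (Finset W)) (hdc : ∀ e ∈ E, ∀ e' ⊆ e, e' ∈ E)
    (hn : Fintype.card W = n) (h2m : 2 * m ≤ n)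
    (hE : (1 - lam ^ Δ) * (n.choose Δ : ℝ) < ((E.filter (fun e => e.card = Δ)).card : ℝ)) :
    (1 - 2 * Δ * lam) ^ m * (n.descFactorial m : ℝ) ≤
      (Nat.card {f : V ↪ W // ∀ j, (H j).map f ∈ E} : ℝ) := by
  classical
  have hΔr : (0:ℝ) < (Δ:ℝ) := by exact_mod_cast hΔ
  have h2Δ : (0:ℝ) < 2 * (Δ:ℝ) := by linarith
  have hlam1 : 2 * (Δ:ℝ) * lam < 1 := by
    rw [lt_div_iff₀ h2Δ] at hlam
    push_cast at hlam ⊢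
    linarith
  have hΔ1 : (1:ℝ) ≤ (Δ:ℝ) := by exact_mod_cast hΔ
  have hlamle1 : lam < 1 := by nlinarith [mul_nonneg (by linarith : (0:ℝ) ≤ (Δ:ℝ)-1) hlam0.le]
  have hΔn : Δ ≤ n := by
    by_contra hgt
    push_neg at hgt
    have he : E.filter (fun e => e.card = Δ) = ∅ := by
      apply Finset.filter_eq_empty_iff.mpr
      intro e _
      intro hc
      have h1 : e.card ≤ Fintype.card W := by
        rw [← Finset.card_univ]; exact Finset.card_le_univ e
      rw [hn, hc] at h1
      omega
    rw [Nat.choose_eq_zero_of_lt hgt, he] at hE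
    simp at hE
  have hn0 : 0 < n := lt_of_lt_of_le hΔ hΔn
  have hΔn' : (Δ:ℝ) ≤ (n:ℝ) := by exact_mod_cast hΔn
  have hlamn : lam * n ≤ (n:ℝ) - Δ + 1 := by
    nlinarith [mul_le_mul_of_nonneg_right hlam1.le (Nat.cast_nonneg n : (0:ℝ) ≤ (n:ℝ)),
      mul_nonneg (by linarith : (0:ℝ) ≤ 2*(Δ:ℝ)-1) (by linarith : (0:ℝ) ≤ (n:ℝ)-(Δ:ℝ))]
  have hW0 : Nonempty W := by
    rw [← Fintype.card_pos_iff, hn]; exact hn0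
  obtain ⟨w₀⟩ := hW0
  -- bound on the number of bad Δ-sets
  have hsplit : (NB E lam n Δ 0 : ℝ) < lam ^ Δ * (n.choose Δ : ℝ) := by
    set s := Finset.univ.filter (fun S : Finset W => S.card = Δ) with hs
    have hscard : s.card = n.choose Δ := by
      have : s = Finset.powersetCard Δ (Finset.univ : Finset W) := by
        ext S
        rw [hs, Finset.mem_filter, Finset.mem_powersetCard_univ]
        simp
      rw [this, Finset.card_powersetCard, Finset.card_univ, hn]
    have hsum := Finset.card_filter_add_card_filter_not
      (s := s) (p := fun S => S ∈ E)
    have h1 : s.filter (fun S => S ∈ E) = E.filter (fun e => e.card = Δ) := by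
      ext S
      rw [hs, Finset.filter_filter, Finset.mem_filter, Finset.mem_filter]
      simp only [Finset.mem_univ, true_and]
      tauto
    have h2 : Finset.univ.filter
        (fun S : Finset W => S.card = Δ - 0 ∧ BadAt E lam n 0 S)
        = s.filter (fun S => ¬ S ∈ E) := by
      ext S
      rw [hs, Finset.filter_filter, Finset.mem_filter, Finset.mem_filter]
      simp only [Finset.mem_univ, true_and, Nat.sub_zero]
      constructor
      · rintro ⟨hc, hb⟩; exact ⟨hc, hb⟩
      · rintro ⟨hc, hb⟩; exact ⟨hc, hb⟩
    have hNB : NB E lam n Δ 0 + (E.filter (fun e => e.card = Δ)).card = n.choose Δ := by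
      rw [← hscard, ← h1]
      rw [NB, h2]
      omega
    have hchoose : ((n.choose Δ : ℕ) : ℝ) = (NB E lam n Δ 0 : ℝ)
        + ((E.filter (fun e => e.card = Δ)).card : ℝ) := by
      exact_mod_cast hNB.symm
    nlinarith [hE, hchoose]
  have hempty : ∅ ∈ E := by
    have hpos : 0 < (E.filter (fun e => e.card = Δ)).card := by
      by_contra h
      push_neg at h
      have h0 : (E.filter (fun e => e.card = Δ)).card = 0 := Nat.le_zero.mp h
      rw [h0] at hE
      have hlp : lam ^ Δ < 1 := pow_lt_one₀ hlam0.le hlamle1 (by omega)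
      have hcn : (0:ℝ) ≤ (n.choose Δ : ℝ) := Nat.cast_nonneg _
      push_cast at hE
      nlinarith
    obtain ⟨e, he⟩ := Finset.card_pos.mp hpos
    exact hdc e (Finset.mem_filter.mp he).1 ∅ (Finset.empty_subset e)
  have hroot := root_not_bad E lam n Δ hdc hn hΔn hlamn hΔ hlam0 hempty hsplit
  set k : V ≃ Fin m := Fintype.equivFinOfCardEq hm with hk
  -- main induction
  have hmain : ∀ i ≤ m, (1 - 2*Δ*lam)^i * (∏ t ∈ Finset.range i, ((n:ℝ) - t))
      ≤ ((TGood E lam n Δ H k w₀ i).card : ℝ) := by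
    intro i hi
    induction i with
    | zero =>
      have hpos : 0 < (TGood E lam n Δ H k w₀ 0).card :=
        Finset.card_pos.mpr ⟨_, TGood_zero_mem E lam n Δ H k w₀ hroot⟩
      simp only [pow_zero, Finset.range_zero, Finset.prod_empty, mul_one, one_mul]
      exact_mod_cast hpos
    | succ i ih =>
      have him : i < m := hi
      have ihi := ih (le_of_lt him)
      have h2i : 2*(i:ℝ) ≤ (n:ℝ) := by
        have : 2*i ≤ n := by omega
        exact_mod_cast this
      have hstep := TGood_step E lam n Δ H k w₀ hn hHdeg hHsize hlam0.le hlam1.le i him h2i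
      have hin : (i:ℝ) ≤ (n:ℝ) := by
        have : i ≤ n := by omega
        exact_mod_cast this
      have hfac : 0 ≤ (1 - 2*(Δ:ℝ)*lam) * ((n:ℝ) - i) :=
        mul_nonneg (by linarith) (by linarith)
      calc (1 - 2*(Δ:ℝ)*lam)^(i+1) * (∏ t ∈ Finset.range (i+1), ((n:ℝ) - t))
          = ((1 - 2*(Δ:ℝ)*lam)^i * ∏ t ∈ Finset.range i, ((n:ℝ) - t))
            * ((1 - 2*(Δ:ℝ)*lam) * ((n:ℝ) - i)) := by
            rw [Finset.prod_range_succ, pow_succ]; ring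
        _ ≤ ((TGood E lam n Δ H k w₀ i).card : ℝ)
            * ((1 - 2*(Δ:ℝ)*lam) * ((n:ℝ) - i)) :=
            mul_le_mul_of_nonneg_right ihi hfac
        _ ≤ ((TGood E lam n Δ H k w₀ (i+1)).card : ℝ) := hstep
  have hTm := hmain m le_rfl
  -- inject the good embeddings into the subtype
  have key : ∀ g ∈ TGood E lam n Δ H k w₀ m,
      Function.Injective (fun v => g (k v)) ∧
      ∀ j, Finset.image (fun v => g (k v)) (H j) ∈ E := by
    intro g hg
    obtain ⟨-, hg1, hg2, hg3⟩ := Finset.mem_filter.mp hg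
    constructor
    · intro v v' hvv'
      have := hg2 (Set.mem_setOf_eq ▸ (k v).isLt) (Set.mem_setOf_eq ▸ (k v').isLt) hvv'
      exact k.injective this
    · intro j
      have h3 := hg3 m le_rfl j
      have hp : part H k m g j = Finset.image (fun v => g (k v)) (H j) := by
        unfold part
        rw [Finset.filter_true_of_mem (fun v _ => (k v).isLt)]
      rw [← hp]
      exact mem_of_not_badAt E lam n h3
  have hcard : (TGood E lam n Δ H k w₀ m).card
      ≤ Nat.card {f : V ↪ W // ∀ j, (H j).map f ∈ E} := by
    rw [Nat.card_eq_fintype_card, ← Fintype.card_coe (TGood E lam n Δ H k w₀ m)]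
    apply Fintype.card_le_of_injective
      (fun x => (⟨⟨fun v => x.1 (k v), (key x.1 x.2).1⟩, fun j => by
        rw [Finset.map_eq_image]; exact (key x.1 x.2).2 j⟩ :
        {f : V ↪ W // ∀ j, (H j).map f ∈ E}))
    intro x y hxy
    have h1 := congrArg
      (fun z : {f : V ↪ W // ∀ j, (H j).map f ∈ E} => (z.1 : V → W)) hxy
    simp only [Function.Embedding.coeFn_mk] at h1
    apply Subtype.ext
    funext a
    have h2 := congrFun h1 (k.symm a)
    simpa [Equiv.apply_symm_apply] using h2
  -- the product is the descending factorial
  have hprod : (∏ t ∈ Finset.range m, ((n:ℝ) - t)) = (n.descFactorial m : ℝ) := by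
    rw [Nat.descFactorial_eq_prod_range, Nat.cast_prod]
    apply Finset.prod_congr rfl
    intro t ht
    rw [Finset.mem_range] at ht
    rw [Nat.cast_sub (by omega)]
  calc (1 - 2*(Δ:ℝ)*lam)^m * (n.descFactorial m : ℝ)
      = (1 - 2*(Δ:ℝ)*lam)^m * (∏ t ∈ Finset.range m, ((n:ℝ) - t)) := by rw [hprod]
    _ ≤ ((TGood E lam n Δ H k w₀ m).card : ℝ) := hTm
    _ ≤ (Nat.card {f : V ↪ W // ∀ j, (H j).map f ∈ E} : ℝ) := by exact_mod_cast hcard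
end

section
/- Let $\mathcal{G}$ be a down-closed hypergraph on $n$ vertices, let $0<\lambda<1$, and call a subset $S\subseteq V(\mathcal{G})$ of size at most $\Delta$ rich if it is contained in more than $(1-\lambda^{\Delta-|S|})\binom{n-|S|}{\Delta-|S|}$ hyperedges of size $\Delta$. Then for any rich set $S$ of size strictly less than $\Delta$, the number of vertices $v\in V(\mathcal{G})\setminus S$ such that $S\cup\{v\}$ is not rich is at most $\lambda n$. -/
open scoped Classical

/-- In a down-closed hypergraph, a rich set of size less than Δ has few
non-rich one-vertex extensions. -/
theorem stmt_7 {W : Type*} [Fintype W] [DecidableEq W]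
    (Δ : ℕ) (hΔ : 0 < Δ) (lam : ℝ) (h0 : 0 < lam) (h1 : lam < 1)
    (E : Finset (Finset W)) (hdc : ∀ e ∈ E, ∀ e' ⊆ e, e' ∈ E)
    (n : ℕ) (hn : Fintype.card W = n)
    (rich : Finset W → Prop)
    (hrich : ∀ S : Finset W, rich S ↔ S.card ≤ Δ ∧
      (1 - lam ^ (Δ - S.card)) * ((n - S.card).choose (Δ - S.card) : ℝ) <
        ((E.filter (fun e => e.card = Δ ∧ S ⊆ e)).card : ℝ))
    (S : Finset W) (hS : rich S) (hSsize : S.card < Δ) :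
    ((Finset.univ.filter (fun v : W => v ∉ S ∧ ¬ rich (insert v S))).card : ℝ)
      ≤ lam * n := by
  classical
  set s := S.card with hs
  set T := E.filter (fun e => e.card = Δ ∧ S ⊆ e) with hT
  obtain ⟨hSΔ, hN⟩ := (hrich S).1 hS
  have hlampow : ∀ k : ℕ, lam ^ k ≤ 1 := fun k => pow_le_one₀ h0.le h1.le
  have hNpos : 0 < T.card := by
    by_contra hcon
    push_neg at hcon
    have : T.card = 0 := Nat.le_zero.mp hcon
    rw [this] at hN
    have h1' : (0:ℝ) ≤ (1 - lam ^ (Δ - s)) * ((n - s).choose (Δ - s) : ℝ) :=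
      mul_nonneg (by linarith [hlampow (Δ - s)]) (Nat.cast_nonneg _)
    simp at hN
    linarith
  -- n ≥ Δ
  obtain ⟨e, he⟩ := Finset.card_pos.mp hNpos
  have heT := Finset.mem_filter.mp he
  have hΔn : Δ ≤ n := by
    rw [← heT.2.1, ← hn]
    exact Finset.card_le_univ e
  set d1 := Δ - s - 1 with hd1
  have hds : Δ - s = d1 + 1 := by omega
  have hns : n - s = (n - s - 1) + 1 := by omega
  set C1 : ℕ := (n - s - 1).choose d1 with hC1
  set C0 : ℕ := (n - s).choose (Δ - s) with hC0
  have hC1pos : 0 < C1 := Nat.choose_pos (by omega)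
  have hident : (n - s) * C1 = (Δ - s) * C0 := by
    have h := Nat.add_one_mul_choose_eq (n - s - 1) d1
    have e1 : (n - s - 1).succ = n - s := by omega
    have e2 : d1.succ = Δ - s := by omega
    rw [show n - s - 1 + 1 = n - s from e1, show d1 + 1 = Δ - s from e2] at h
    rw [hC1, hC0, h]
    exact Nat.mul_comm _ _
  set B := Finset.univ.filter (fun v : W => v ∉ S ∧ ¬ rich (insert v S)) with hB
  have hBsub : B ⊆ Finset.univ \ S := by
    intro v hv
    simp only [hB, Finset.mem_filter] at hv
    simp [hv.2.1]
  -- degree of v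
  have hdeg : ∀ v ∈ Finset.univ \ S, (T.filter (fun e => v ∈ e)).card ≤ C1 := by
    intro v hv
    have hvS : v ∉ S := by simpa using hv
    have hcard : (insert v S).card = s + 1 := Finset.card_insert_of_notMem hvS
    have hmap : ∀ e ∈ T.filter (fun e => v ∈ e),
        e \ insert v S ∈ (Finset.univ \ insert v S).powersetCard d1 := by
      intro e he'
      simp only [hT, Finset.mem_filter] at he'
      obtain ⟨⟨heE, hec, hSe⟩, hve⟩ := he'
      have hIs : insert v S ⊆ e := Finset.insert_subset hve hSe
      rw [Finset.mem_powersetCard]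
      constructor
      · exact Finset.sdiff_subset_sdiff (Finset.subset_univ e) (le_refl _)
      · rw [Finset.card_sdiff_of_subset hIs, hec, hcard]; omega
    have hinj : ∀ e₁ ∈ T.filter (fun e => v ∈ e), ∀ e₂ ∈ T.filter (fun e => v ∈ e),
        e₁ \ insert v S = e₂ \ insert v S → e₁ = e₂ := by
      intro e₁ h₁ e₂ h₂ heq
      simp only [hT, Finset.mem_filter] at h₁ h₂
      have hI₁ : insert v S ⊆ e₁ := Finset.insert_subset h₁.2 h₁.1.2.2
      have hI₂ : insert v S ⊆ e₂ := Finset.insert_subset h₂.2 h₂.1.2.2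
      rw [← Finset.sdiff_union_of_subset hI₁, ← Finset.sdiff_union_of_subset hI₂, heq]
    calc (T.filter (fun e => v ∈ e)).card
        ≤ ((Finset.univ \ insert v S).powersetCard d1).card :=
          Finset.card_le_card_of_injOn _ hmap hinj
      _ = C1 := by
          rw [Finset.card_powersetCard, Finset.card_sdiff_of_subset (Finset.subset_univ _), Finset.card_univ, hn, hcard,
            show n - (s+1) = n - s - 1 from by omega, hC1]
  -- bad degree bound
  have hbad : ∀ v ∈ B, ((T.filter (fun e => v ∈ e)).card : ℝ) ≤ (1 - lam ^ d1) * C1 := by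
    intro v hv
    simp only [hB, Finset.mem_filter] at hv
    obtain ⟨-, hvS, hnr⟩ := hv
    have hcard : (insert v S).card = s + 1 := Finset.card_insert_of_notMem hvS
    rw [hrich (insert v S)] at hnr
    push_neg at hnr
    have hle := hnr (by omega)
    rw [hcard] at hle
    have hfeq : E.filter (fun e => e.card = Δ ∧ insert v S ⊆ e)
        = T.filter (fun e => v ∈ e) := by
      ext e
      simp only [hT, Finset.mem_filter, Finset.insert_subset_iff]
      tauto
    rw [hfeq] at hle
    calc ((T.filter (fun e => v ∈ e)).card : ℝ)
        ≤ (1 - lam ^ (Δ - (s+1))) * ((n - (s+1)).choose (Δ - (s+1)) : ℝ) := hle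
      _ = (1 - lam ^ d1) * C1 := by
          rw [hC1]
          congr 2 <;> omega
  -- double counting
  have hsum : ∑ v ∈ Finset.univ \ S, (T.filter (fun e => v ∈ e)).card
      = (Δ - s) * T.card := by
    have : ∀ v, (T.filter (fun e => v ∈ e)).card = ∑ e ∈ T, if v ∈ e then 1 else 0 := by
      intro v; rw [Finset.card_filter]
    simp_rw [this]
    rw [Finset.sum_comm]
    have : ∀ e ∈ T, (∑ v ∈ Finset.univ \ S, if v ∈ e then 1 else 0) = Δ - s := by
      intro e he'
      simp only [hT, Finset.mem_filter] at he'
      rw [show (∑ v ∈ Finset.univ \ S, if v ∈ e then 1 else 0)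
          = ((Finset.univ \ S).filter (fun v => v ∈ e)).card from (Finset.card_filter _ _).symm]
      have : (Finset.univ \ S).filter (fun v => v ∈ e) = e \ S := by
        ext v; simp; tauto
      rw [this, Finset.card_sdiff_of_subset he'.2.2, he'.2.1]
    rw [Finset.sum_congr rfl this, Finset.sum_const, smul_eq_mul, Nat.mul_comm]
  -- the key real inequality
  have hsplit := Finset.sum_sdiff (f := fun v => ((T.filter (fun e => v ∈ e)).card : ℝ)) hBsub
  have hcardsd : ((Finset.univ \ S) \ B).card = (n - s) - B.card := by
    rw [Finset.card_sdiff_of_subset hBsub, Finset.card_sdiff_of_subset (Finset.subset_univ S), Finset.card_univ, hn]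
  have hBle : B.card ≤ n - s := by
    have h := Finset.card_le_card hBsub
    rw [Finset.card_sdiff_of_subset (Finset.subset_univ S), Finset.card_univ, hn] at h
    exact h
  have hsum1 : ∑ v ∈ (Finset.univ \ S) \ B, ((T.filter (fun e => v ∈ e)).card : ℝ)
      ≤ ((n - s) - B.card : ℕ) * C1 := by
    rw [← hcardsd]
    calc ∑ v ∈ (Finset.univ \ S) \ B, ((T.filter (fun e => v ∈ e)).card : ℝ)
        ≤ ∑ v ∈ (Finset.univ \ S) \ B, (C1 : ℝ) := by
          apply Finset.sum_le_sum
          intro v hv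
          exact_mod_cast hdeg v (Finset.sdiff_subset hv)
      _ = _ := by rw [Finset.sum_const, nsmul_eq_mul]
  have hsum2 : ∑ v ∈ B, ((T.filter (fun e => v ∈ e)).card : ℝ)
      ≤ B.card * ((1 - lam ^ d1) * C1) := by
    calc ∑ v ∈ B, ((T.filter (fun e => v ∈ e)).card : ℝ)
        ≤ ∑ v ∈ B, (1 - lam ^ d1) * (C1:ℝ) := Finset.sum_le_sum hbad
      _ = _ := by rw [Finset.sum_const, nsmul_eq_mul]
  have htot : ((Δ - s) * T.card : ℕ) ≤ (((n - s) - B.card : ℕ) : ℝ) * C1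
      + B.card * ((1 - lam ^ d1) * C1) := by
    rw [← hsum]
    push_cast
    rw [← hsplit]
    push_cast
    linarith
  -- now convert to the final inequality
  have hcast1 : (((n - s) - B.card : ℕ) : ℝ) = ((n-s:ℕ):ℝ) - B.card := by
    rw [Nat.cast_sub hBle]
  have hNlb : (1 - lam ^ (Δ - s)) * (C0 : ℝ) < T.card := hN
  have hΔspos : (0:ℕ) < Δ - s := by omega
  -- multiply hNlb by (Δ - s)
  have hmul : ((Δ - s : ℕ):ℝ) * ((1 - lam ^ (Δ - s)) * C0) < ((Δ - s : ℕ):ℝ) * T.card := by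
    apply mul_lt_mul_of_pos_left hNlb
    exact_mod_cast hΔspos
  have hidentR : ((n - s : ℕ):ℝ) * C1 = ((Δ - s : ℕ):ℝ) * C0 := by
    exact_mod_cast congrArg (Nat.cast : ℕ → ℝ) hident
  have hkey : (B.card : ℝ) * (lam ^ d1 * C1) < lam ^ (Δ - s) * (((n - s:ℕ)) * C1) := by
    have h1' : ((Δ - s : ℕ):ℝ) * T.card ≤ (((n-s:ℕ):ℝ) - B.card) * C1
        + B.card * ((1 - lam ^ d1) * C1) := by
      rw [← hcast1]
      calc ((Δ - s : ℕ):ℝ) * T.card = (((Δ - s) * T.card : ℕ) : ℝ) := by push_cast; ring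
        _ ≤ _ := htot
    have haux : lam ^ (Δ - s) * (((n - s:ℕ):ℝ) * C1)
        = lam ^ (Δ - s) * (((Δ - s:ℕ):ℝ) * C0) := by rw [hidentR]
    nlinarith [hmul, haux, h1']
  have hpowbreak : lam ^ (Δ - s) = lam * lam ^ d1 := by
    rw [hds, pow_succ]; ring
  have hC1R : (0:ℝ) < (C1:ℝ) := by exact_mod_cast hC1pos
  have hfin : (B.card : ℝ) < lam * ((n - s : ℕ):ℝ) := by
    have hfac : (0:ℝ) < lam ^ d1 * C1 := by positivity
    rw [hpowbreak] at hkey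
    have : (B.card : ℝ) * (lam ^ d1 * C1) < (lam * ((n-s:ℕ):ℝ)) * (lam ^ d1 * C1) := by
      calc (B.card : ℝ) * (lam ^ d1 * C1) < lam * lam ^ d1 * (((n - s:ℕ)) * C1) := hkey
        _ = (lam * ((n-s:ℕ):ℝ)) * (lam ^ d1 * C1) := by ring
    exact lt_of_mul_lt_mul_right this hfac.le
  have hnsn : ((n - s : ℕ):ℝ) ≤ (n:ℝ) := by exact_mod_cast Nat.sub_le n s
  have hle2 : lam * ((n - s:ℕ):ℝ) ≤ lam * n := mul_le_mul_of_nonneg_left hnsn h0.le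
  exact (hfin.trans_le hle2).le
end
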